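/- arXiv:2601.14621 — 8 statements merged into one kernel-verified Lean document; each statement's English description precedes it below -/
import Mathlib

section
/- Characterization of the maximum likelihood estimate via order statistics: let 1 ≤ k ≤ N be naturals and y ∈ ℝ^N, and let y_(1) ≥ y_(2) ≥ … ≥ y_(N) be the entries of y rearranged in decreasing order. For k₀ ∈ {0,…,k} define ξ_k^N(k₀; y) = ∑_{i=1}^{k₀} min_{u∈U}(y_(i) − u)² + ∑_{i=k₀+1}^{N−(k−k₀)} y_(i)² + ∑_{i=N−(k−k₀)+1}^{N} min_{u∈U}(y_(i) − u)². Then min_{x ∈ X_k^N(U)} ‖y − x‖₂² = min_{k₀ ∈ {0,…,k}} ξ_k^N(k₀; y). -/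
open MeasureTheory ProbabilityTheory Real Filter Finset
open scoped ENNReal NNReal Classical

/-- The finite set of vectors indexed by `ι` having exactly `w` nonzero entries,
each nonzero entry lying in the finite set `U`. -/
noncomputable def sparseVecs (U : Finset ℝ) (ι : Type) [Fintype ι] [DecidableEq ι]
    (w : ℕ) : Finset (ι → ℝ) :=
  (Fintype.piFinset fun _ : ι => insert (0 : ℝ) U).filter
    fun x => (Finset.univ.filter fun i => x i ≠ 0).card = w

/-- Uniform probability measure on a finite set. -/
noncomputable def uniformOn {α : Type*} [MeasurableSpace α] (S : Finset α) : Measure α :=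
  (S.card : ℝ≥0∞)⁻¹ • ∑ x ∈ S, Measure.dirac x


theorem card_filter_fin (N : ℕ) (p : ℕ → Prop) [DecidablePred p] :
    (Finset.univ.filter fun i : Fin N => p i).card = ((Finset.range N).filter p).card := by
  rw [← Finset.card_map ⟨Fin.val, Fin.val_injective⟩]
  congr 1
  ext j
  simp only [Finset.mem_map, Finset.mem_filter, Finset.mem_univ, true_and,
    Function.Embedding.coeFn_mk, Finset.mem_range]
  constructor
  · rintro ⟨i, hi, rfl⟩; exact ⟨i.isLt, hi⟩
  · rintro ⟨hj, hp⟩; exact ⟨⟨j, hj⟩, hp, rfl⟩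

theorem card_SK (N k k₀ : ℕ) (hk₀ : k₀ ≤ k) (hkN : k ≤ N) :
    (Finset.univ.filter fun i : Fin N => (i : ℕ) < k₀ ∨ N - (k - k₀) ≤ (i : ℕ)).card = k := by
  rw [card_filter_fin N (fun j => j < k₀ ∨ N - (k - k₀) ≤ j)]
  rw [Finset.filter_or]
  rw [Finset.card_union_of_disjoint]
  · have h1 : (Finset.range N).filter (fun i => i < k₀) = Finset.range k₀ := by
      ext j; simp only [Finset.mem_filter, Finset.mem_range]; omega
    have h2 : (Finset.range N).filter (fun i => N - (k - k₀) ≤ i) = Finset.Ico (N - (k - k₀)) N := by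
      ext j; simp only [Finset.mem_filter, Finset.mem_range, Finset.mem_Ico]; omega
    rw [h1, h2, Finset.card_range, Nat.card_Ico]; omega
  · simp only [Finset.disjoint_left, Finset.mem_filter, Finset.mem_range]
    omega


theorem exchange_aux (N k : ℕ) (hkN : k ≤ N) (g : Fin N → ℝ)
    (hg : ∀ a b c : Fin N, a ≤ b → b ≤ c → g a ≤ g b ∨ g c ≤ g b) :
    ∀ n : ℕ, ∀ S : Finset (Fin N), S.card = k →
      (∀ h : Sᶜ.Nonempty, ((Sᶜ.max' h : ℕ) - (Sᶜ.min' h : ℕ)) ≤ n) →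
      ∃ k₀, k₀ ≤ k ∧
        ∑ i ∈ (Finset.univ.filter fun i : Fin N => (i : ℕ) < k₀ ∨ N - (k - k₀) ≤ (i : ℕ)), g i
          ≤ ∑ i ∈ S, g i := by
  intro n
  induction n using Nat.strong_induction_on with
  | _ n ih =>
  intro S hS hspan
  by_cases hcne : Sᶜ.Nonempty
  · have haC : Sᶜ.min' hcne ∈ Sᶜ := Finset.min'_mem _ hcne
    have hcC : Sᶜ.max' hcne ∈ Sᶜ := Finset.max'_mem _ hcne
    set a := Sᶜ.min' hcne with ha_def
    set c := Sᶜ.max' hcne with hc_def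
    have hcard : Sᶜ.card = N - k := by
      rw [Finset.card_compl, hS]; simp
    have hsub : Sᶜ ⊆ Finset.Icc a c := fun x hx =>
      Finset.mem_Icc.2 ⟨Finset.min'_le _ _ hx, Finset.le_max' _ _ hx⟩
    have hIccCard : (Finset.Icc a c).card = (c : ℕ) + 1 - (a : ℕ) := by
      exact Fin.card_Icc a c
    have hac : (a : ℕ) ≤ (c : ℕ) := Finset.min'_le _ _ hcC
    have hNk1 : 1 ≤ N - k := by
      rw [← hcard]; exact Finset.card_pos.2 hcne
    have hge : N - k ≤ (c : ℕ) + 1 - (a : ℕ) := by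
      rw [← hcard, ← hIccCard]; exact Finset.card_le_card hsub
    by_cases hint : (c : ℕ) + 1 - (a : ℕ) ≤ N - k
    · -- complement is an interval
      have hEq : Sᶜ = Finset.Icc a c :=
        Finset.eq_of_subset_of_card_le hsub (by rw [hIccCard, hcard]; exact hint)
      have hcN := c.isLt
      refine ⟨(a : ℕ), by omega, ?_⟩
      have hSeq : (Finset.univ.filter fun i : Fin N =>
          (i : ℕ) < (a : ℕ) ∨ N - (k - (a : ℕ)) ≤ (i : ℕ)) = S := by
        have hS2 : S = Sᶜᶜ := by simp
        rw [hS2, hEq]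
        ext i
        have hiN := i.isLt
        simp only [Finset.mem_filter, Finset.mem_univ, true_and, Finset.mem_compl,
          Finset.mem_Icc, Fin.le_def, not_and, not_le]
        omega
      rw [hSeq]
    · -- exchange step
      have hlt : Sᶜ.card < (Finset.Icc a c).card := by rw [hIccCard, hcard]; omega
      obtain ⟨b, hbIcc, hbnc⟩ := Finset.exists_of_ssubset (hsub.ssubset_of_ne (by intro h; rw [h, hIccCard] at hcard; omega))
      have hbS : b ∈ S := by simpa using hbnc
      have hab : a ≠ b := fun h => hbnc (h ▸ haC)
      have hbc : b ≠ c := fun h => hbnc (h ▸ hcC)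
      rw [Finset.mem_Icc] at hbIcc
      have haS : a ∉ S := by simpa using haC
      have hcS : c ∉ S := by simpa using hcC
      rcases hg a b c hbIcc.1 hbIcc.2 with hcase | hcase
      · -- replace b by a
        set S' := insert a (S.erase b) with hS'
        have haE : a ∉ S.erase b := fun h => haS (Finset.mem_of_mem_erase h)
        have hcard' : S'.card = k := by
          rw [hS', Finset.card_insert_of_notMem haE, Finset.card_erase_of_mem hbS, hS]
          omega
        have hsum' : ∑ i ∈ S', g i ≤ ∑ i ∈ S, g i := by
          rw [hS', Finset.sum_insert haE, Finset.sum_erase_eq_sub hbS]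
          linarith
        have hcomp' : S'ᶜ = insert b (Sᶜ.erase a) := by
          ext x
          simp only [hS', Finset.mem_compl, Finset.mem_insert, Finset.mem_erase]
          rcases eq_or_ne x a with rfl | hxa
          · simp [hab]
          · rcases eq_or_ne x b with rfl | hxb
            · simp [hxa, hbS]
            · simp [hxa, hxb]
        have hne' : S'ᶜ.Nonempty := ⟨b, by rw [hcomp']; exact Finset.mem_insert_self _ _⟩
        have hminGt : (a : ℕ) < ((S'ᶜ.min' hne' : Fin N) : ℕ) := by
          apply Fin.lt_def.mp
          have hm : S'ᶜ.min' hne' ∈ insert b (Sᶜ.erase a) := by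
            rw [← hcomp']; exact Finset.min'_mem S'ᶜ hne'
          rcases Finset.mem_insert.1 hm with h | h
          · rw [h]; exact lt_of_le_of_ne hbIcc.1 hab
          · exact lt_of_le_of_ne (Finset.min'_le _ _ (Finset.mem_of_mem_erase h))
              (Ne.symm (Finset.ne_of_mem_erase h))
        have hmaxLe : ((S'ᶜ.max' hne' : Fin N) : ℕ) ≤ (c : ℕ) := by
          apply Fin.le_def.mp
          apply Finset.max'_le
          intro x hx
          rw [hcomp'] at hx
          rcases Finset.mem_insert.1 hx with h | h
          · rw [h]; exact hbIcc.2
          · exact Finset.le_max' _ _ (Finset.mem_of_mem_erase h)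
        have hspanS : ((Sᶜ.max' hcne : ℕ) - (Sᶜ.min' hcne : ℕ)) ≤ n := hspan hcne
        have hm : ((S'ᶜ.max' hne' : ℕ) - (S'ᶜ.min' hne' : ℕ)) < n := by
          have hminle : ((S'ᶜ.min' hne' : Fin N)) ≤ (S'ᶜ.max' hne') := Finset.min'_le _ _ (Finset.max'_mem _ hne')
          rw [Fin.le_def] at hminle
          omega
        obtain ⟨k₀, hk₀, hsum₀⟩ := ih _ hm S' hcard' (fun _ => le_rfl)
        exact ⟨k₀, hk₀, le_trans hsum₀ hsum'⟩
      · -- replace b by c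
        set S' := insert c (S.erase b) with hS'
        have hcE : c ∉ S.erase b := fun h => hcS (Finset.mem_of_mem_erase h)
        have hcard' : S'.card = k := by
          rw [hS', Finset.card_insert_of_notMem hcE, Finset.card_erase_of_mem hbS, hS]
          omega
        have hsum' : ∑ i ∈ S', g i ≤ ∑ i ∈ S, g i := by
          rw [hS', Finset.sum_insert hcE, Finset.sum_erase_eq_sub hbS]
          linarith
        have hcomp' : S'ᶜ = insert b (Sᶜ.erase c) := by
          ext x
          simp only [hS', Finset.mem_compl, Finset.mem_insert, Finset.mem_erase]
          rcases eq_or_ne x c with rfl | hxc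
          · simp [hbc.symm]
          · rcases eq_or_ne x b with rfl | hxb
            · simp [hxc, hbS]
            · simp [hxc, hxb]
        have hne' : S'ᶜ.Nonempty := ⟨b, by rw [hcomp']; exact Finset.mem_insert_self _ _⟩
        have hmaxLt : ((S'ᶜ.max' hne' : Fin N) : ℕ) < (c : ℕ) := by
          apply Fin.lt_def.mp
          have hm : S'ᶜ.max' hne' ∈ insert b (Sᶜ.erase c) := by
            rw [← hcomp']; exact Finset.max'_mem S'ᶜ hne'
          rcases Finset.mem_insert.1 hm with h | h
          · rw [h]; exact lt_of_le_of_ne hbIcc.2 hbc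
          · exact lt_of_le_of_ne (Finset.le_max' _ _ (Finset.mem_of_mem_erase h))
              (Finset.ne_of_mem_erase h)
        have hminGe : (a : ℕ) ≤ ((S'ᶜ.min' hne' : Fin N) : ℕ) := by
          apply Fin.le_def.mp
          have hm : S'ᶜ.min' hne' ∈ insert b (Sᶜ.erase c) := by
            rw [← hcomp']; exact Finset.min'_mem S'ᶜ hne'
          rcases Finset.mem_insert.1 hm with h | h
          · rw [h]; exact hbIcc.1
          · exact Finset.min'_le _ _ (Finset.mem_of_mem_erase h)
        have hspanS : ((Sᶜ.max' hcne : ℕ) - (Sᶜ.min' hcne : ℕ)) ≤ n := hspan hcne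
        have hm : ((S'ᶜ.max' hne' : ℕ) - (S'ᶜ.min' hne' : ℕ)) < n := by
          omega
        obtain ⟨k₀, hk₀, hsum₀⟩ := ih _ hm S' hcard' (fun _ => le_rfl)
        exact ⟨k₀, hk₀, le_trans hsum₀ hsum'⟩
  · -- complement empty: S = univ, k = N
    have hSuniv : S = Finset.univ := by
      rw [Finset.not_nonempty_iff_eq_empty] at hcne
      rwa [Finset.compl_eq_empty_iff] at hcne
    have hkn : k = N := by
      rw [hSuniv, Finset.card_univ, Fintype.card_fin] at hS; omega
    refine ⟨k, le_rfl, ?_⟩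
    have : (Finset.univ.filter fun i : Fin N => (i : ℕ) < k ∨ N - (k - k) ≤ (i : ℕ)) = S := by
      rw [hSuniv]
      apply Finset.filter_true_of_mem
      intro i _
      left
      rw [hkn]
      exact i.isLt
    rw [this]


theorem quasi_concave (U : Finset ℝ) (hU : U.Nonempty) (N : ℕ) (z : Fin N → ℝ)
    (hz : Antitone z) (a b c : Fin N) (hab : a ≤ b) (hbc : b ≤ c) :
    (U.inf' hU (fun u => (z a - u) ^ 2) - z a ^ 2 ≤ U.inf' hU (fun u => (z b - u) ^ 2) - z b ^ 2)
    ∨ (U.inf' hU (fun u => (z c - u) ^ 2) - z c ^ 2 ≤ U.inf' hU (fun u => (z b - u) ^ 2) - z b ^ 2) := by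
  obtain ⟨u, huU, hub⟩ := Finset.exists_mem_eq_inf' hU (fun u => (z b - u) ^ 2)
  rcases le_or_gt 0 u with hu | hu
  · left
    have h1 : U.inf' hU (fun u' => (z a - u') ^ 2) ≤ (z a - u) ^ 2 := Finset.inf'_le _ huU
    have h2 : z b ≤ z a := hz hab
    rw [hub]
    nlinarith
  · right
    have h1 : U.inf' hU (fun u' => (z c - u') ^ 2) ≤ (z c - u) ^ 2 := Finset.inf'_le _ huU
    have h2 : z c ≤ z b := hz hbc
    rw [hub]
    nlinarith

theorem mem_sparseVecs {U : Finset ℝ} {N w : ℕ} {x : Fin N → ℝ} :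
    x ∈ sparseVecs U (Fin N) w ↔
      (∀ i, x i = 0 ∨ x i ∈ U) ∧ (Finset.univ.filter fun i => x i ≠ 0).card = w := by
  simp [sparseVecs, Fintype.mem_piFinset]

theorem sparseVecs_perm {U : Finset ℝ} {N w : ℕ} {x : Fin N → ℝ}
    (e : Equiv.Perm (Fin N)) (hx : x ∈ sparseVecs U (Fin N) w) :
    (x ∘ e) ∈ sparseVecs U (Fin N) w := by
  rw [mem_sparseVecs] at hx ⊢
  refine ⟨fun i => hx.1 (e i), ?_⟩
  rw [← hx.2]
  apply Finset.card_bij (fun i _ => e i)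
  · intro i hi
    simp only [Finset.mem_filter, Finset.mem_univ, true_and] at hi ⊢
    exact hi
  · intro i _ j _ hij
    exact e.injective hij
  · intro j hj
    refine ⟨e.symm j, ?_, by simp⟩
    simp only [Finset.mem_filter, Finset.mem_univ, true_and, Function.comp_apply,
      Equiv.apply_symm_apply] at hj ⊢
    exact hj

theorem cost_split {N : ℕ} (S : Finset (Fin N)) (m q : Fin N → ℝ) :
    ∑ i ∈ S, m i + ∑ i ∈ Sᶜ, q i = (∑ i, q i) + ∑ i ∈ S, (m i - q i) := by
  rw [Finset.sum_sub_distrib, ← Finset.sum_add_sum_compl S q]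
  ring


theorem ml_order_statistics
    (U : Finset ℝ) (hU : U.Nonempty) (hU0 : ∀ u ∈ U, u ≠ 0)
    (N k : ℕ) (hk : 1 ≤ k) (hkN : k ≤ N)
    (y z : Fin N → ℝ) (hz_sorted : Antitone z)
    (hz_perm : ∃ e : Equiv.Perm (Fin N), z = y ∘ e) :
    ∃ hne : (sparseVecs U (Fin N) k).Nonempty,
      (sparseVecs U (Fin N) k).inf' hne (fun x => ∑ i, (y i - x i) ^ 2)
        = (Finset.range (k + 1)).inf' ⟨0, Finset.mem_range.2 k.succ_pos⟩
            (fun k₀ => ∑ i : Fin N,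
              if (i : ℕ) < k₀ then U.inf' hU (fun u => (z i - u) ^ 2)
              else if (i : ℕ) < N - (k - k₀) then (z i) ^ 2
              else U.inf' hU (fun u => (z i - u) ^ 2)) := by
  obtain ⟨e, he⟩ := hz_perm
  set m : Fin N → ℝ := fun i => U.inf' hU (fun u => (z i - u) ^ 2) with hm
  have hsel : ∀ i : Fin N, ∃ u ∈ U, U.inf' hU (fun u' => (z i - u') ^ 2) = (z i - u) ^ 2 :=
    fun i => Finset.exists_mem_eq_inf' hU _
  choose sel hselU hselEq using hsel
  set Sd : ℕ → Finset (Fin N) :=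
    fun k₀ => Finset.univ.filter fun i : Fin N => (i : ℕ) < k₀ ∨ N - (k - k₀) ≤ (i : ℕ) with hSd
  have hSdcard : ∀ k₀, k₀ ≤ k → (Sd k₀).card = k := fun k₀ h => card_SK N k k₀ h hkN
  -- construction of an optimal vector supported on S
  have hxS : ∀ S : Finset (Fin N), S.card = k →
      ∃ v ∈ sparseVecs U (Fin N) k,
        ∑ i, (z i - v i) ^ 2 = ∑ i ∈ S, m i + ∑ i ∈ Sᶜ, z i ^ 2 := by
    intro S hS
    refine ⟨fun i => if i ∈ S then sel i else 0, ?_, ?_⟩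
    · rw [mem_sparseVecs]
      constructor
      · intro i; by_cases h : i ∈ S <;> simp [h, hselU i]
      · rw [← hS]; congr 1; ext i
        by_cases h : i ∈ S <;> simp [h, hU0 _ (hselU i)]
    · rw [← Finset.sum_add_sum_compl S]
      congr 1
      · apply Finset.sum_congr rfl
        intro i hi
        simp only [hi, if_pos]
        exact (hselEq i).symm
      · apply Finset.sum_congr rfl
        intro i hi
        rw [Finset.mem_compl] at hi
        simp [hi]
  -- lower bound for any sparse vector
  have hlow : ∀ v ∈ sparseVecs U (Fin N) k, ∃ S : Finset (Fin N), S.card = k ∧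
      ∑ i ∈ S, m i + ∑ i ∈ Sᶜ, z i ^ 2 ≤ ∑ i, (z i - v i) ^ 2 := by
    intro v hv
    rw [mem_sparseVecs] at hv
    refine ⟨Finset.univ.filter fun i => v i ≠ 0, hv.2, ?_⟩
    rw [← Finset.sum_add_sum_compl (Finset.univ.filter fun i => v i ≠ 0)
      (fun i => (z i - v i) ^ 2)]
    apply add_le_add
    · apply Finset.sum_le_sum
      intro i hi
      simp only [Finset.mem_filter, Finset.mem_univ, true_and] at hi
      have hvU : v i ∈ U := (hv.1 i).resolve_left hi
      exact Finset.inf'_le _ hvU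
    · apply Finset.sum_le_sum
      intro i hi
      simp only [Finset.mem_compl, Finset.mem_filter, Finset.mem_univ, true_and,
        not_not] at hi
      rw [hi]
      simp
  -- rewriting ξ(k₀) as a cost of Sd k₀
  have hxi : ∀ k₀, k₀ ≤ k →
      (∑ i : Fin N, if (i : ℕ) < k₀ then m i
        else if (i : ℕ) < N - (k - k₀) then z i ^ 2 else m i)
      = ∑ i ∈ Sd k₀, m i + ∑ i ∈ (Sd k₀)ᶜ, z i ^ 2 := by
    intro k₀ _
    rw [← Finset.sum_add_sum_compl (Sd k₀)
      (fun i : Fin N => if (i : ℕ) < k₀ then m i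
        else if (i : ℕ) < N - (k - k₀) then z i ^ 2 else m i)]
    congr 1
    · apply Finset.sum_congr rfl
      intro i hi
      rw [hSd] at hi
      simp only [Finset.mem_filter, Finset.mem_univ, true_and] at hi
      split_ifs with h1 h2
      · rfl
      · omega
      · rfl
    · apply Finset.sum_congr rfl
      intro i hi
      rw [hSd] at hi
      simp only [Finset.mem_compl, Finset.mem_filter, Finset.mem_univ, true_and,
        not_or, not_lt, not_le] at hi
      split_ifs with h1 h2
      · omega
      · rfl
      · omega
  -- exchange argument
  have hexch : ∀ S : Finset (Fin N), S.card = k →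
      ∃ k₀, k₀ ≤ k ∧ ∑ i ∈ Sd k₀, (m i - z i ^ 2) ≤ ∑ i ∈ S, (m i - z i ^ 2) := by
    intro S hS
    exact exchange_aux N k hkN (fun i => m i - z i ^ 2)
      (fun a b c hab hbc => quasi_concave U hU N z hz_sorted a b c hab hbc)
      N S hS (fun h => by have := (Sᶜ.max' h).isLt; omega)
  -- transfer between y and z
  have htrans : ∀ v : Fin N → ℝ,
      ∑ i, (y i - (v ∘ e.symm) i) ^ 2 = ∑ i, (z i - v i) ^ 2 := by
    intro v
    rw [← Equiv.sum_comp e (fun i => (y i - (v ∘ e.symm) i) ^ 2)]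
    apply Finset.sum_congr rfl
    intro i _
    simp [he]
  have htrans2 : ∀ x : Fin N → ℝ,
      ∑ i, (y i - x i) ^ 2 = ∑ i, (z i - (x ∘ e) i) ^ 2 := by
    intro x
    rw [← Equiv.sum_comp e (fun i => (y i - x i) ^ 2)]
    apply Finset.sum_congr rfl
    intro i _
    simp [he]
  obtain ⟨v0, hv0, _⟩ := hxS (Sd k) (hSdcard k le_rfl)
  refine ⟨⟨v0, hv0⟩, ?_⟩
  apply le_antisymm
  · apply Finset.le_inf'
    intro k₀ hk₀
    rw [Finset.mem_range] at hk₀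
    have hk₀' : k₀ ≤ k := by omega
    obtain ⟨v, hv, hvsum⟩ := hxS (Sd k₀) (hSdcard k₀ hk₀')
    calc (sparseVecs U (Fin N) k).inf' ⟨v0, hv0⟩ (fun x => ∑ i, (y i - x i) ^ 2)
        ≤ ∑ i, (y i - (v ∘ e.symm) i) ^ 2 :=
          Finset.inf'_le _ (sparseVecs_perm e.symm hv)
      _ = ∑ i, (z i - v i) ^ 2 := htrans v
      _ = ∑ i ∈ Sd k₀, m i + ∑ i ∈ (Sd k₀)ᶜ, z i ^ 2 := hvsum
      _ = _ := (hxi k₀ hk₀').symm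
  · apply Finset.le_inf'
    intro x hx
    have hv : x ∘ e ∈ sparseVecs U (Fin N) k := sparseVecs_perm e hx
    obtain ⟨S, hScard, hcost⟩ := hlow (x ∘ e) hv
    obtain ⟨k₀, hk₀, hgle⟩ := hexch S hScard
    have h1 : ∑ i ∈ Sd k₀, m i + ∑ i ∈ (Sd k₀)ᶜ, z i ^ 2
        ≤ ∑ i ∈ S, m i + ∑ i ∈ Sᶜ, z i ^ 2 := by
      rw [cost_split (Sd k₀) m (fun i => z i ^ 2), cost_split S m (fun i => z i ^ 2)]
      linarith
    calc (Finset.range (k + 1)).inf' ⟨0, Finset.mem_range.2 k.succ_pos⟩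
          (fun k₀ => ∑ i : Fin N,
            if (i : ℕ) < k₀ then U.inf' hU (fun u => (z i - u) ^ 2)
            else if (i : ℕ) < N - (k - k₀) then (z i) ^ 2
            else U.inf' hU (fun u => (z i - u) ^ 2))
        ≤ ∑ i : Fin N, if (i : ℕ) < k₀ then m i
            else if (i : ℕ) < N - (k - k₀) then z i ^ 2 else m i :=
          Finset.inf'_le _ (Finset.mem_range.2 (by omega))
      _ = ∑ i ∈ Sd k₀, m i + ∑ i ∈ (Sd k₀)ᶜ, z i ^ 2 := hxi k₀ hk₀
      _ ≤ ∑ i ∈ S, m i + ∑ i ∈ Sᶜ, z i ^ 2 := h1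
      _ ≤ ∑ i, (z i - (x ∘ e) i) ^ 2 := hcost
      _ = ∑ i, (y i - x i) ^ 2 := (htrans2 x).symm
end

section
/- Gallager-type bound, correct-support case: assume M ≥ 2 and let d_min = min_{m≠m'} |u_m − u_{m'}| > 0. Fix naturals 1 ≤ k < N, σ² > 0, and a vector x ∈ X_k^N(U) with support S_x. Let ω ∈ ℝ^N have i.i.d. N(0, σ²/log(N/k)) entries, y = x + ω, and let x̂ : ℝ^N → X_k^N(U) be any measurable function satisfying ‖y − x̂(y)‖₂ ≤ ‖y − x'‖₂ for every y and every x' ∈ X_k^N(U). Then for every w' ∈ {0,…,k}, ℙ( S_{x̂(y)} = S_x and #{ n ∈ S_x : x̂(y)_n ≠ x_n } = w' ) ≤ C(k, w')·(M−1)^{w'}·(N/k)^{−d_min²·w'/(8σ²)}, where C(k,w') is the binomial coefficient. -/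
open MeasureTheory ProbabilityTheory Real Filter Finset
open scoped ENNReal NNReal Classical

/-!
A union bound over the possible outputs of the decoder. If it returns `z` with the correct
support and `w'` wrong entries, then `‖y - z‖ ≤ ‖y - x‖` with `y = x + ω` says
`⟨z - x, ω⟩ ≥ ‖z - x‖² / 2`, while `‖z - x‖² ≥ w' dmin²`. The linear form `⟨z - x, ω⟩` is
Gaussian with variance `v ‖z - x‖²`, so by the Chernoff bound this event has probability at most
`exp (-w' dmin² / (8 v))`, which is `(N / k) ^ (-dmin² w' / (8 σ²))` for `v = σ² / log (N / k)`.
There are at most `C(k, w') (M - 1) ^ w'` candidates `z`: choose the wrong positions, then a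
wrong value in `U` at each of them.
-/

section

variable {ι : Type*} [Fintype ι]

lemma hasSubgaussianMGF_id_gaussianReal (v : ℝ≥0) :
    HasSubgaussianMGF id v (gaussianReal 0 v) where
  integrable_exp_mul := integrable_exp_mul_gaussianReal
  mgf_le t := by simp [mgf_id_gaussianReal]

lemma hasSubgaussianMGF_const_mul_eval_pi_gaussianReal (v : ℝ≥0) (a : ℝ) (i : ι) :
    HasSubgaussianMGF (fun ω : ι → ℝ => a * ω i) (NNReal.mk (a ^ 2) (sq_nonneg a) * v)
      (Measure.pi fun _ => gaussianReal 0 v) := by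
  have hmap : (Measure.pi fun _ : ι => gaussianReal 0 v).map (fun ω => a * ω i)
      = gaussianReal 0 (NNReal.mk (a ^ 2) (sq_nonneg a) * v) := by
    rw [show (fun ω : ι → ℝ => a * ω i) = (a * ·) ∘ Function.eval i from rfl,
      ← Measure.map_map (measurable_const_mul a) (measurable_pi_apply i),
      (measurePreserving_eval _ i).map_eq, gaussianReal_map_const_mul, mul_zero]
  have hmeas : Measurable fun ω : ι → ℝ => a * ω i := by fun_prop
  rw [← HasSubgaussianMGF.id_map_iff hmeas.aemeasurable, hmap]
  exact hasSubgaussianMGF_id_gaussianReal _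

theorem measureReal_pi_gaussianReal_half_sum_sq_le_sum_mul (v : ℝ≥0) (c : ι → ℝ) :
    (Measure.pi fun _ : ι => gaussianReal 0 v).real
        {ω | (∑ i, c i ^ 2) / 2 ≤ ∑ i, c i * ω i}
      ≤ exp (-(∑ i, c i ^ 2) / (8 * v)) := by
  have hoeffding := HasSubgaussianMGF.measure_sum_ge_le_of_iIndepFun
    (iIndepFun_pi (X := fun i t => c i * t) fun i => by fun_prop)
    (fun i _ => hasSubgaussianMGF_const_mul_eval_pi_gaussianReal v (c i) i)
    (s := Finset.univ) (ε := (∑ i, c i ^ 2) / 2) (by positivity)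
  refine hoeffding.trans (exp_le_exp.2 (le_of_eq ?_))
  simp only [NNReal.coe_sum, NNReal.coe_mul, NNReal.coe_mk, ← Finset.sum_mul]
  -- if `∑ i, c i ^ 2 = 0` or `v = 0`, both exponents are `0` by division by zero
  rcases eq_or_ne (∑ i, c i ^ 2) 0 with h | h
  · simp [h]
  rcases eq_or_ne (v : ℝ) 0 with hv | hv
  · simp [hv]
  field_simp
  ring

theorem card_mul_sq_le_sum_sq_sub {U : Finset ℝ} {d : ℝ} (hd : 0 ≤ d)
    (hU : ∀ u ∈ U, ∀ u' ∈ U, u ≠ u' → d ≤ |u - u'|) {z x : ι → ℝ} (D : Finset ι)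
    (hD : ∀ i ∈ D, z i ∈ U ∧ x i ∈ U ∧ z i ≠ x i) :
    #D * d ^ 2 ≤ ∑ i, (z i - x i) ^ 2 := by
  calc #D * d ^ 2 = ∑ _i ∈ D, d ^ 2 := by rw [sum_const, nsmul_eq_mul]
    _ ≤ ∑ i ∈ D, (z i - x i) ^ 2 := sum_le_sum fun i hi => by
      obtain ⟨hz, hx, hne⟩ := hD i hi
      simpa only [sq_abs] using pow_le_pow_left₀ hd (hU _ hz _ hx hne) 2
    _ ≤ ∑ i, (z i - x i) ^ 2 :=
      sum_le_sum_of_subset_of_nonneg (subset_univ D) fun i _ _ => sq_nonneg _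

theorem sum_sq_div_two_le_sum_mul_of_sum_sq_sub_le {a ω : ι → ℝ}
    (h : ∑ i, (ω i - a i) ^ 2 ≤ ∑ i, ω i ^ 2) :
    (∑ i, a i ^ 2) / 2 ≤ ∑ i, a i * ω i := by
  have hexpand : ∑ i, (ω i - a i) ^ 2 = ∑ i, ω i ^ 2 - 2 * ∑ i, a i * ω i + ∑ i, a i ^ 2 := by
    rw [mul_sum, ← sum_sub_distrib, ← sum_add_distrib]
    exact sum_congr rfl fun i _ => by ring
  linarith

end

section

variable {ι : Type} [Fintype ι] [DecidableEq ι] {U : Finset ℝ} {k : ℕ}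

lemma mem_sparseVecs_s3 {z : ι → ℝ} :
    z ∈ sparseVecs U ι k ↔ (∀ n, z n ≠ 0 → z n ∈ U) ∧ #{n | z n ≠ 0} = k := by
  simp only [sparseVecs, mem_filter, Fintype.mem_piFinset, mem_insert]
  refine and_congr_left' ⟨fun h n hn => (h n).resolve_left hn, fun h n => ?_⟩
  exact or_iff_not_imp_left.2 (h n)

theorem card_filter_support_eq_card_filter_ne_le (x : ι → ℝ) (hx : x ∈ sparseVecs U ι k)
    (w : ℕ) :
    #{z ∈ sparseVecs U ι k |
        ({n | z n ≠ 0} : Finset ι) = ({n | x n ≠ 0} : Finset ι) ∧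
          #{n ∈ {n | x n ≠ 0} | z n ≠ x n} = w}
      ≤ k.choose w * (#U - 1) ^ w := by
  set S : Finset ι := {n | x n ≠ 0}
  have hxU := (mem_sparseVecs_s3.1 hx).1
  have hsub : {z ∈ sparseVecs U ι k |
        ({n | z n ≠ 0} : Finset ι) = S ∧ #{n ∈ S | z n ≠ x n} = w}
      ⊆ (S.powersetCard w).biUnion fun D =>
          Fintype.piFinset fun n => if n ∈ D then U.erase (x n) else {x n} := by
    intro z hz
    obtain ⟨hzk, hzS, hzw⟩ := mem_filter.1 hz
    refine mem_biUnion.2 ⟨{n ∈ S | z n ≠ x n}, mem_powersetCard.2 ⟨filter_subset _ _, hzw⟩, ?_⟩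
    refine Fintype.mem_piFinset.2 fun n => ?_
    by_cases hn : n ∈ S
    · have hz0 : z n ≠ 0 := by simpa using (hzS ▸ hn : n ∈ ({n | z n ≠ 0} : Finset ι))
      by_cases hne : z n = x n
      · simp [hn, hne]
      · simp [hn, hne, (mem_sparseVecs_s3.1 hzk).1 n hz0]
    · have hx0 : x n = 0 := by simpa [S] using hn
      have hz0 : z n = 0 := by simpa using (hzS ▸ hn : n ∉ ({n | z n ≠ 0} : Finset ι))
      simp [hn, hx0, hz0]
  calc _ ≤ ∑ D ∈ S.powersetCard w, #(Fintype.piFinset fun n =>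
          if n ∈ D then U.erase (x n) else {x n}) := (card_le_card hsub).trans card_biUnion_le
    _ = ∑ D ∈ S.powersetCard w, (#U - 1) ^ w := by
      refine sum_congr rfl fun D hD => ?_
      obtain ⟨hDS, hDw⟩ := mem_powersetCard.1 hD
      rw [Fintype.card_piFinset, ← hDw, ← prod_const, ← prod_subset (subset_univ D)]
      · refine prod_congr rfl fun n hn => ?_
        have : x n ∈ U := hxU n (by simpa [S] using hDS hn)
        simp [hn, card_erase_of_mem this]
      · intro n _ hn
        simp [hn]
    _ = k.choose w * (#U - 1) ^ w := by
      rw [sum_const, card_powersetCard, (mem_sparseVecs_s3.1 hx).2, smul_eq_mul]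

theorem measureReal_support_eq_card_filter_ne_eq_le {d : ℝ} (hd : 0 ≤ d)
    (hU : ∀ u ∈ U, ∀ u' ∈ U, u ≠ u' → d ≤ |u - u'|) (v : ℝ≥0)
    (x : ι → ℝ) (hx : x ∈ sparseVecs U ι k)
    (xhat : (ι → ℝ) → ι → ℝ) (hrange : ∀ y, xhat y ∈ sparseVecs U ι k)
    (hML : ∀ y : ι → ℝ, ∀ x' ∈ sparseVecs U ι k,
      ∑ i, (y i - xhat y i) ^ 2 ≤ ∑ i, (y i - x' i) ^ 2) (w : ℕ) :
    (Measure.pi fun _ : ι => gaussianReal 0 v).real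
        {ω | ({n | xhat (x + ω) n ≠ 0} : Finset ι) = ({n | x n ≠ 0} : Finset ι) ∧
          #{n ∈ {n | x n ≠ 0} | xhat (x + ω) n ≠ x n} = w}
      ≤ (k.choose w * (#U - 1) ^ w : ℕ) * exp (-(w * d ^ 2) / (8 * v)) := by
  set T := {z ∈ sparseVecs U ι k | ({n | z n ≠ 0} : Finset ι) = ({n | x n ≠ 0} : Finset ι) ∧
    #{n ∈ {n | x n ≠ 0} | z n ≠ x n} = w}
  have hcover : {ω | ({n | xhat (x + ω) n ≠ 0} : Finset ι) = ({n | x n ≠ 0} : Finset ι) ∧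
        #{n ∈ {n | x n ≠ 0} | xhat (x + ω) n ≠ x n} = w}
      ⊆ ⋃ z ∈ T, {ω | (∑ i, (z i - x i) ^ 2) / 2 ≤ ∑ i, (z i - x i) * ω i} := by
    intro ω hω
    refine Set.mem_iUnion₂.2 ⟨xhat (x + ω), mem_filter.2 ⟨hrange _, hω⟩, ?_⟩
    apply sum_sq_div_two_le_sum_mul_of_sum_sq_sub_le
    simpa [sub_sub_eq_add_sub, add_comm] using hML (x + ω) x hx
  have hgap : ∀ z ∈ T, w * d ^ 2 ≤ ∑ i, (z i - x i) ^ 2 := by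
    intro z hz
    obtain ⟨hzk, hzS, hzw⟩ := mem_filter.1 hz
    rw [← hzw]
    refine card_mul_sq_le_sum_sq_sub hd hU _ fun i hi => ?_
    obtain ⟨hiS, hne⟩ := mem_filter.1 hi
    have hx0 : x i ≠ 0 := (mem_filter.1 hiS).2
    have hz0 : z i ≠ 0 := by simpa using (hzS ▸ hiS : i ∈ ({n | z n ≠ 0} : Finset ι))
    exact ⟨(mem_sparseVecs_s3.1 hzk).1 i hz0, (mem_sparseVecs_s3.1 hx).1 i hx0, hne⟩
  calc _ ≤ ∑ z ∈ T, (Measure.pi fun _ : ι => gaussianReal 0 v).real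
          {ω | (∑ i, (z i - x i) ^ 2) / 2 ≤ ∑ i, (z i - x i) * ω i} :=
        (measureReal_mono hcover (measure_ne_top _ _)).trans (measureReal_biUnion_finset_le _ _)
    _ ≤ ∑ _z ∈ T, exp (-(w * d ^ 2) / (8 * v)) := sum_le_sum fun z hz =>
        (measureReal_pi_gaussianReal_half_sum_sq_le_sum_mul v _).trans <| exp_le_exp.2 <|
          div_le_div_of_nonneg_right (neg_le_neg (hgap z hz)) (by positivity)
    _ ≤ _ := by
      rw [sum_const, nsmul_eq_mul]
      gcongr
      exact card_filter_support_eq_card_filter_ne_le x hx w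

end

theorem gallager_correct_support_general
    (U : Finset ℝ) (hM : 2 ≤ U.card)
    (dmin : ℝ) (hdmin : IsLeast {t : ℝ | ∃ u ∈ U, ∃ v ∈ U, u ≠ v ∧ t = |u - v|} dmin)
    (hdminpos : 0 < dmin)
    (N k : ℕ) (hk : 1 ≤ k) (hkN : k < N) (σ2 : ℝ) (hσ : 0 < σ2)
    (x : Fin N → ℝ) (hx : x ∈ sparseVecs U (Fin N) k)
    (xhat : (Fin N → ℝ) → (Fin N → ℝ))
    (hrange : ∀ y, xhat y ∈ sparseVecs U (Fin N) k)
    (hML : ∀ y : Fin N → ℝ, ∀ x' ∈ sparseVecs U (Fin N) k,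
      ∑ i, (y i - xhat y i) ^ 2 ≤ ∑ i, (y i - x' i) ^ 2)
    (w' : ℕ) :
    ((Measure.pi fun _ : Fin N =>
        gaussianReal 0 (σ2 / Real.log ((N : ℝ) / (k : ℝ))).toNNReal)
      {ω : Fin N → ℝ |
        (Finset.univ.filter fun n => xhat (x + ω) n ≠ 0)
          = (Finset.univ.filter fun n => x n ≠ 0) ∧
        ((Finset.univ.filter fun n => x n ≠ 0).filter
          fun n => xhat (x + ω) n ≠ x n).card = w'}).toReal
    ≤ (k.choose w' : ℝ) * ((U.card : ℝ) - 1) ^ w'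
        * ((N : ℝ) / (k : ℝ)) ^ (-(dmin ^ 2 * (w' : ℝ)) / (8 * σ2)) := by
  have hNk : 1 < (N : ℝ) / k := (one_lt_div (Nat.cast_pos.2 hk)).2 (by exact_mod_cast hkN)
  have hlog : 0 < Real.log ((N : ℝ) / k) := Real.log_pos hNk
  have hbound := measureReal_support_eq_card_filter_ne_eq_le hdminpos.le
    (fun u hu u' hu' hne => hdmin.2 ⟨u, hu, u', hu', hne, rfl⟩)
    (σ2 / Real.log ((N : ℝ) / k)).toNNReal x hx xhat hrange hML w'
  refine hbound.trans_eq ?_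
  rw [Nat.cast_mul, Nat.cast_pow, Nat.cast_sub (by omega), Nat.cast_one,
    Real.rpow_def_of_pos (zero_lt_one.trans hNk), Real.coe_toNNReal _ (div_pos hσ hlog).le]
  congr 2
  field_simp

theorem gallager_correct_support
    (U : Finset ℝ) (hM : 2 ≤ U.card) (hU0 : ∀ u ∈ U, u ≠ 0)
    (dmin : ℝ) (hdmin : IsLeast {t : ℝ | ∃ u ∈ U, ∃ v ∈ U, u ≠ v ∧ t = |u - v|} dmin)
    (hdminpos : 0 < dmin)
    (N k : ℕ) (hk : 1 ≤ k) (hkN : k < N) (σ2 : ℝ) (hσ : 0 < σ2)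
    (x : Fin N → ℝ) (hx : x ∈ sparseVecs U (Fin N) k)
    (xhat : (Fin N → ℝ) → (Fin N → ℝ)) (hmeas : Measurable xhat)
    (hrange : ∀ y, xhat y ∈ sparseVecs U (Fin N) k)
    (hML : ∀ y : Fin N → ℝ, ∀ x' ∈ sparseVecs U (Fin N) k,
      ∑ i, (y i - xhat y i) ^ 2 ≤ ∑ i, (y i - x' i) ^ 2)
    (w' : ℕ) (hw' : w' ≤ k) :
    ((Measure.pi fun _ : Fin N =>
        gaussianReal 0 (σ2 / Real.log ((N : ℝ) / (k : ℝ))).toNNReal)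
      {ω : Fin N → ℝ |
        (Finset.univ.filter fun n => xhat (x + ω) n ≠ 0)
          = (Finset.univ.filter fun n => x n ≠ 0) ∧
        ((Finset.univ.filter fun n => x n ≠ 0).filter
          fun n => xhat (x + ω) n ≠ x n).card = w'}).toReal
    ≤ (k.choose w' : ℝ) * ((U.card : ℝ) - 1) ^ w'
        * ((N : ℝ) / (k : ℝ)) ^ (-(dmin ^ 2 * (w' : ℝ)) / (8 * σ2)) :=
  gallager_correct_support_general U hM dmin hdmin hdminpos N k hk hkN σ2 hσ x hx xhat hrange hML w'
end

section
/- Reduction of the sparse Gaussian-mixture sum to the high-noise coordinates: fix a finite nonempty set U = {u_1,…,u_M} ⊂ ℝ \ {0} with u_max = max_m |u_m|, a natural k ≥ 1, and a variance parameter σ̃² > 0. For t ∈ ℝ let h(t) = ∑_{m=1}^M exp( (u_max·|u_m| − u_m²/2 + u_m·t)/σ̃² ). For a natural j ≤ k and ω ∈ ℝ^j define G_w^j(ω) = ∑_{x' ∈ X_w^j(U)} exp( (u_max·‖x'‖₁ − ‖x'‖₂²/2 + ⟨x', ω⟩)/σ̃² ) for 0 ≤ w ≤ j (so G_0^j = 1).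 For integers 0 ≤ w ≤ w' ≤ n let L_{w,w'}^n = ∏_{i=0}^{w'−w−1} (w'−i)/(n−w−i) (empty product = 1), and define H_0(j) = 1 and, for 1 ≤ w ≤ k−1, H_w(j) = ∑_{w' = max(j−w, 0)}^{min(j, k−w)} C(j, w')·⌈ L_{k−w−w', k−j}^{k−j} ⌉. Given ω ∈ ℝ^k, let I = { i ∈ {1,…,k} : h(ω_i) ≤ 1 } and let ω_{I^c} ∈ ℝ^{k−|I|} be the restriction of ω to the complementary coordinates. Then for every w ∈ {0, …, k−1}: G_{k−w}^k(ω) ≤ H_w(|I|) · G_{k−|I|}^{k−|I|}(ω_{I^c}). -/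
open MeasureTheory ProbabilityTheory Real Filter Finset
open scoped ENNReal NNReal Classical

/-- `L_{w,w'}^n = ∏_{i=0}^{w'-w-1} (w'-i)/(n-w-i)` (empty product = 1). -/
noncomputable def Lconst (w w' n : ℕ) : ℝ :=
  ∏ i ∈ Finset.range (w' - w), ((w' : ℝ) - i) / ((n : ℝ) - w - i)

/-- `G_w^ι(ω)`: the sparse Gaussian-mixture sum over `w`-sparse vectors indexed by `ι`. -/
noncomputable def Gfun (U : Finset ℝ) (umax σt2 : ℝ) (ι : Type) [Fintype ι] [DecidableEq ι]
    (w : ℕ) (ω : ι → ℝ) : ℝ :=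
  ∑ x ∈ sparseVecs U ι w,
    Real.exp ((umax * ∑ i, |x i| - (∑ i, (x i) ^ 2) / 2 + ∑ i, x i * ω i) / σt2)

/-- `H_w(j)` of the paper. -/
noncomputable def Hfun (k w j : ℕ) : ℝ :=
  if w = 0 then 1 else
    ∑ w' ∈ Finset.Icc (j - w) (min j (k - w)),
      (j.choose w' : ℝ) * (⌈Lconst (k - w - w') (k - j) (k - j)⌉₊ : ℝ)

/-- The one-coordinate mixture function `h(t)`. -/
noncomputable def hco (U : Finset ℝ) (umax σt2 t : ℝ) : ℝ :=
  ∑ u ∈ U, Real.exp ((umax * |u| - u ^ 2 / 2 + u * t) / σt2)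

lemma Gfun_eq_sum (U : Finset ℝ) (h0 : (0 : ℝ) ∉ U) (umax σt2 : ℝ)
    (ι : Type) [Fintype ι] [DecidableEq ι] (s : ℕ) (ω : ι → ℝ) :
    Gfun U umax σt2 ι s ω =
      ∑ S ∈ (Finset.univ : Finset ι).powersetCard s, ∏ i ∈ S, hco U umax σt2 (ω i) := by
  classical
  set e : ι → ℝ → ℝ := fun i u => Real.exp ((umax * |u| - u ^ 2 / 2 + u * ω i) / σt2) with he
  have hval : ∀ x : ι → ℝ,
      Real.exp ((umax * ∑ i, |x i| - (∑ i, (x i) ^ 2) / 2 + ∑ i, x i * ω i) / σt2)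
        = ∏ i, e i (x i) := by
    intro x
    have h1 : (umax * ∑ i, |x i| - (∑ i, (x i) ^ 2) / 2 + ∑ i, x i * ω i)
        = ∑ i, (umax * |x i| - (x i) ^ 2 / 2 + x i * ω i) := by
      rw [Finset.sum_add_distrib, Finset.sum_sub_distrib, ← Finset.mul_sum, ← Finset.sum_div]
    rw [h1, Finset.sum_div, Real.exp_sum]
  have hmaps : ∀ x ∈ sparseVecs U ι s,
      (Finset.univ.filter fun i => x i ≠ 0) ∈ (Finset.univ : Finset ι).powersetCard s := by
    intro x hx
    rw [Finset.mem_powersetCard]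
    exact ⟨Finset.filter_subset _ _, (Finset.mem_filter.mp hx).2⟩
  calc Gfun U umax σt2 ι s ω
      = ∑ x ∈ sparseVecs U ι s, ∏ i, e i (x i) :=
        Finset.sum_congr rfl fun x _ => hval x
    _ = ∑ S ∈ (Finset.univ : Finset ι).powersetCard s,
          ∑ x ∈ (sparseVecs U ι s).filter
            (fun x => (Finset.univ.filter fun i => x i ≠ 0) = S), ∏ i, e i (x i) :=
        (Finset.sum_fiberwise_of_maps_to hmaps _).symm
    _ = ∑ S ∈ (Finset.univ : Finset ι).powersetCard s, ∏ i ∈ S, hco U umax σt2 (ω i) := by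
        refine Finset.sum_congr rfl fun S hS => ?_
        rw [Finset.mem_powersetCard] at hS
        have hrhs : ∏ i ∈ S, hco U umax σt2 (ω i)
            = ∑ p ∈ S.pi (fun _ => U), ∏ a ∈ S.attach, e a.1 (p a.1 a.2) := by
          rw [← Finset.prod_sum]
          rfl
        rw [hrhs]
        refine Finset.sum_nbij' (fun x => fun a _ => x a)
          (fun p => fun i => if h : i ∈ S then p i h else 0) ?_ ?_ ?_ ?_ ?_
        · intro x hx
          rw [Finset.mem_filter] at hx
          obtain ⟨hx1, hsupp⟩ := hx
          rw [sparseVecs, Finset.mem_filter, Fintype.mem_piFinset] at hx1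
          rw [Finset.mem_pi]
          intro a ha
          have hne : x a ≠ 0 := by
            rw [← hsupp] at ha
            exact (Finset.mem_filter.mp ha).2
          rcases Finset.mem_insert.mp (hx1.1 a) with h | h
          · exact absurd h hne
          · exact h
        · intro p hp
          rw [Finset.mem_pi] at hp
          have hsupp : (Finset.univ.filter fun i =>
              (fun i => if h : i ∈ S then p i h else 0) i ≠ 0) = S := by
            ext i
            simp only [Finset.mem_filter, Finset.mem_univ, true_and]
            constructor
            · intro hne
              by_contra hiS
              simp [hiS] at hne
            · intro hiS
              simp only [hiS, dif_pos]
              intro hzero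
              exact h0 (hzero ▸ hp i hiS)
          rw [Finset.mem_filter]
          constructor
          · rw [sparseVecs, Finset.mem_filter]
            constructor
            · rw [Fintype.mem_piFinset]
              intro i
              by_cases hiS : i ∈ S
              · simp only [hiS, dif_pos]
                exact Finset.mem_insert_of_mem (hp i hiS)
              · simp only [hiS, dif_neg, not_false_iff]
                exact Finset.mem_insert_self 0 U
            · rw [hsupp]; exact hS.2
          · exact hsupp
        · intro x hx
          rw [Finset.mem_filter] at hx
          funext i
          by_cases hiS : i ∈ S
          · simp [hiS]
          · simp only [hiS, dif_neg, not_false_iff]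
            by_contra hne
            exact hiS (hx.2 ▸ Finset.mem_filter.mpr ⟨Finset.mem_univ i, fun h => hne h.symm⟩)
        · intro p hp
          funext a ha
          simp [ha]
        · intro x hx
          rw [Finset.mem_filter] at hx
          have hzero : ∀ i ∈ Finset.univ, i ∉ S → e i (x i) = 1 := by
            intro i _ hiS
            have : x i = 0 := by
              by_contra hne
              exact hiS (hx.2 ▸ Finset.mem_filter.mpr ⟨Finset.mem_univ i, hne⟩)
            simp [he, this]
          rw [← Finset.prod_subset (Finset.subset_univ S) hzero]
          rw [← Finset.prod_attach S (fun i => e i (x i))]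

lemma Lconst_self (a n : ℕ) (h : a ≤ n) : Lconst a n n = (n.choose a : ℝ) := by
  set m := n - a with hm
  have hnum : ∀ i ∈ Finset.range m, ((n : ℝ) - i) = ((n - i : ℕ) : ℝ) := by
    intro i hi
    rw [Nat.cast_sub (by have := Finset.mem_range.mp hi; omega)]
  have hden : ∀ i ∈ Finset.range m, ((n : ℝ) - a - i) = ((m - i : ℕ) : ℝ) := by
    intro i hi
    rw [Nat.cast_sub (le_of_lt (Finset.mem_range.mp hi)), hm, Nat.cast_sub h]
  rw [Lconst, Finset.prod_div_distrib, Finset.prod_congr rfl hnum,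
    Finset.prod_congr rfl hden, ← Nat.cast_prod, ← Nat.cast_prod,
    ← Nat.descFactorial_eq_prod_range, ← Nat.descFactorial_eq_prod_range,
    Nat.descFactorial_self, Nat.descFactorial_eq_factorial_mul_choose, Nat.cast_mul]
  rw [mul_comm, mul_div_assoc, div_self (by positivity), mul_one]
  rw [hm, Nat.choose_symm h]

lemma vandermonde_Icc (k w j : ℕ) (hj : j ≤ k) :
    ∑ w' ∈ Finset.Icc (j - w) (min j (k - w)), j.choose w' * (k - j).choose (k - w - w')
      = k.choose (k - w) := by
  have h1 : k.choose (k - w)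
      = ∑ w' ∈ Finset.range (k - w + 1), j.choose w' * (k - j).choose (k - w - w') := by
    rw [show k.choose (k - w) = (j + (k - j)).choose (k - w) by congr 1; omega]
    rw [Nat.add_choose_eq, Finset.Nat.sum_antidiagonal_eq_sum_range_succ_mk]
  rw [h1]
  refine Finset.sum_subset ?_ ?_
  · intro x hx
    simp only [Finset.mem_Icc] at hx
    simp only [Finset.mem_range]
    omega
  · intro x hx hnx
    simp only [Finset.mem_range] at hx
    simp only [Finset.mem_Icc, not_and, not_le] at hnx
    rcases lt_or_ge x (j - w) with hlt | hge
    · have : k - j < k - w - x := by omega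
      rw [Nat.choose_eq_zero_of_lt this, Nat.mul_zero]
    · have : j < x := by
        have := hnx hge
        omega
      rw [Nat.choose_eq_zero_of_lt this, Nat.zero_mul]

lemma Hfun_eq (k w j : ℕ) (hj : j ≤ k) :
    Hfun k w j = (k.choose (k - w) : ℝ) := by
  rw [Hfun]
  by_cases h0 : w = 0
  · simp [h0]
  rw [if_neg h0]
  have hcong : ∀ w' ∈ Finset.Icc (j - w) (min j (k - w)),
      (j.choose w' : ℝ) * (⌈Lconst (k - w - w') (k - j) (k - j)⌉₊ : ℝ)
        = ((j.choose w' * (k - j).choose (k - w - w') : ℕ) : ℝ) := by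
    intro w' hw'
    simp only [Finset.mem_Icc] at hw'
    have hle : k - w - w' ≤ k - j := by omega
    rw [Lconst_self _ _ hle, Nat.ceil_natCast, Nat.cast_mul]
  rw [Finset.sum_congr rfl hcong, ← Nat.cast_sum, vandermonde_Icc k w j hj]

theorem mixture_sum_reduction
    (U : Finset ℝ) (hU : U.Nonempty) (hU0 : ∀ u ∈ U, u ≠ 0)
    (umax : ℝ) (humax : IsGreatest {t : ℝ | ∃ u ∈ U, t = |u|} umax)
    (k : ℕ) (hk : 1 ≤ k) (σt2 : ℝ) (hσ : 0 < σt2)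
    (ω : Fin k → ℝ)
    (I : Finset (Fin k))
    (hI : I = Finset.univ.filter fun i =>
      (∑ u ∈ U, Real.exp ((umax * |u| - u ^ 2 / 2 + u * ω i) / σt2)) ≤ 1)
    (w : ℕ) (hw : w ≤ k - 1) :
    Gfun U umax σt2 (Fin k) (k - w) ω
      ≤ Hfun k w I.card *
        Gfun U umax σt2 {i : Fin k // i ∈ (Iᶜ : Finset (Fin k))} (k - I.card)
          (fun i => ω i.1) := by
  classical
  have h0U : (0 : ℝ) ∉ U := fun h => hU0 0 h rfl
  have hjk : I.card ≤ k := by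
    have := Finset.card_le_univ I
    simpa using this
  have hpos : ∀ t, 0 < hco U umax σt2 t := fun t =>
    Finset.sum_pos (fun u _ => Real.exp_pos _) hU
  have hmemI : ∀ i : Fin k, i ∈ I ↔ hco U umax σt2 (ω i) ≤ 1 := by
    intro i
    rw [hI]
    simp [hco]
  set P : ℝ := ∏ i ∈ Iᶜ, hco U umax σt2 (ω i) with hP
  have hPpos : 0 < P := Finset.prod_pos (fun i _ => hpos _)
  -- the RHS Gfun equals P
  have hG2 : Gfun U umax σt2 {i : Fin k // i ∈ (Iᶜ : Finset (Fin k))} (k - I.card)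
      (fun i => ω i.1) = P := by
    rw [Gfun_eq_sum U h0U umax σt2 _ _ _]
    have hcard : (Finset.univ : Finset {i : Fin k // i ∈ (Iᶜ : Finset (Fin k))}).card
        = k - I.card := by
      rw [Finset.card_univ, Fintype.card_coe, Finset.card_compl, Fintype.card_fin]
    rw [← hcard, Finset.powersetCard_self, Finset.sum_singleton, hP]
    exact Finset.prod_coe_sort Iᶜ fun i => hco U umax σt2 (ω i)
  rw [hG2, Hfun_eq k w I.card hjk]
  -- bound the LHS
  rw [Gfun_eq_sum U h0U umax σt2 _ _ _]
  have hterm : ∀ S ∈ (Finset.univ : Finset (Fin k)).powersetCard (k - w),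
      ∏ i ∈ S, hco U umax σt2 (ω i) ≤ P := by
    intro S _
    have hsplitS : ∏ i ∈ S, hco U umax σt2 (ω i)
        = (∏ i ∈ S ∩ Iᶜ, hco U umax σt2 (ω i)) * ∏ i ∈ S \ Iᶜ, hco U umax σt2 (ω i) :=
      (Finset.prod_inter_mul_prod_diff S Iᶜ _).symm
    have hsplitP : P
        = (∏ i ∈ Iᶜ ∩ S, hco U umax σt2 (ω i)) * ∏ i ∈ Iᶜ \ S, hco U umax σt2 (ω i) :=
      (Finset.prod_inter_mul_prod_diff Iᶜ S _).symm
    have hb : (0 : ℝ) < ∏ i ∈ S ∩ Iᶜ, hco U umax σt2 (ω i) :=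
      Finset.prod_pos fun i _ => hpos _
    have ha : ∏ i ∈ S \ Iᶜ, hco U umax σt2 (ω i) ≤ 1 := by
      refine Finset.prod_le_one (fun i _ => (hpos _).le) ?_
      intro i hi
      have hiI : i ∈ I := by
        have := (Finset.mem_sdiff.mp hi).2
        simpa using this
      exact (hmemI i).mp hiI
    have hc : (1 : ℝ) ≤ ∏ i ∈ Iᶜ \ S, hco U umax σt2 (ω i) := by
      calc (1 : ℝ) = ∏ _i ∈ Iᶜ \ S, (1 : ℝ) := by rw [Finset.prod_const_one]
        _ ≤ ∏ i ∈ Iᶜ \ S, hco U umax σt2 (ω i) := by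
            refine Finset.prod_le_prod (fun i _ => zero_le_one) ?_
            intro i hi
            have hiI : i ∉ I := Finset.mem_compl.mp (Finset.mem_sdiff.mp hi).1
            have := (hmemI i).not.mp hiI
            linarith [lt_of_not_ge this]
    calc ∏ i ∈ S, hco U umax σt2 (ω i)
        ≤ ∏ i ∈ S ∩ Iᶜ, hco U umax σt2 (ω i) := by
          rw [hsplitS]
          nlinarith [hb, ha]
      _ = ∏ i ∈ Iᶜ ∩ S, hco U umax σt2 (ω i) := by rw [Finset.inter_comm]
      _ ≤ P := by
          rw [hsplitP]
          nlinarith [hb, hc, Finset.inter_comm S Iᶜ ▸ hb]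
  calc ∑ S ∈ (Finset.univ : Finset (Fin k)).powersetCard (k - w),
        ∏ i ∈ S, hco U umax σt2 (ω i)
      ≤ ((Finset.univ : Finset (Fin k)).powersetCard (k - w)).card • P :=
        Finset.sum_le_card_nsmul _ _ _ hterm
    _ = (k.choose (k - w) : ℝ) * P := by
        rw [Finset.card_powersetCard, Finset.card_univ, Fintype.card_fin, nsmul_eq_mul]
end

section
/- High-noise coordinates are rare: fix a finite nonempty set U = {u_1,…,u_M} ⊂ ℝ \ {0} with u_min = min_m |u_m| and u_max = max_m |u_m|, and assume u_min ∈ U (the minimal absolute value is attained at a positive element of U). Let naturals 1 ≤ k < N, σ² > 0, σ̃² = σ²/log(N/k), and for t ∈ ℝ let h(t) = ∑_{m=1}^M exp( (u_max·|u_m| − u_m²/2 + u_m·t)/σ̃² ). If ω is a real Gaussian random variable with mean 0 and variance σ̃², then ℙ( h(ω) ≤ 1 ) ≤ (N/k)^{−C₁,₂}, where C₁,₂ = (u_max − u_min/2)²/(2σ²). -/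
/-!
Since `u_min ∈ U` is positive, `h(ω) ≤ 1` forces the `u_min`-term of `h` to be at most `1`,
which says `ω ≤ u_min / 2 - u_max`. The Chernoff bound for a centred Gaussian bounds this left
tail by `exp (-(u_max - u_min / 2)² / (2 σ̃²))`, and `σ̃² = σ² / log (N / k)` turns this
into `(N / k) ^ (-C₁,₂)`.
-/

open MeasureTheory ProbabilityTheory Real Filter Finset
open scoped ENNReal NNReal Classical

namespace ProbabilityTheory

lemma hasSubgaussianMGF_sub_mean_gaussianReal (μ : ℝ) (v : ℝ≥0) :
    HasSubgaussianMGF (fun x ↦ x - μ) v (gaussianReal μ v) := by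
  have hX : (gaussianReal μ v).map (fun x ↦ x - μ) = gaussianReal 0 v := by
    simp [gaussianReal_map_sub_const]
  refine ⟨fun t ↦ ?_, fun t ↦ ?_⟩
  · rw [← mgf_pos_iff, mgf_gaussianReal hX]
    exact exp_pos _
  · rw [mgf_gaussianReal hX, zero_mul, zero_add, mul_comm]

lemma gaussianReal_real_Iic_sub_le (μ : ℝ) (v : ℝ≥0) {a : ℝ} (ha : 0 ≤ a) :
    (gaussianReal μ v).real (Set.Iic (μ - a)) ≤ exp (-a ^ 2 / (2 * v)) := by
  convert (hasSubgaussianMGF_sub_mean_gaussianReal μ v).neg.measure_ge_le ha using 2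
  ext x
  simp only [Set.mem_Iic, Set.mem_ofPred_eq, Pi.neg_apply]
  constructor <;> intro h <;> linarith

end ProbabilityTheory

lemma le_half_sub_of_sum_exp_le_one {U : Finset ℝ} {u c s t : ℝ} (hu : u ∈ U) (hu0 : 0 < u)
    (hs : 0 < s) (h : ∑ w ∈ U, exp ((c * |w| - w ^ 2 / 2 + w * t) / s) ≤ 1) :
    t ≤ u / 2 - c := by
  have hterm : exp ((c * |u| - u ^ 2 / 2 + u * t) / s) ≤ 1 :=
    (single_le_sum (f := fun w ↦ exp ((c * |w| - w ^ 2 / 2 + w * t) / s))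
      (fun w _ ↦ (exp_pos _).le) hu).trans h
  have hexponent : c * u - u ^ 2 / 2 + u * t ≤ 0 := by
    rwa [exp_le_one_iff, div_le_iff₀ hs, zero_mul, abs_of_pos hu0] at hterm
  nlinarith

lemma exp_neg_sq_div_div_log_eq_rpow {x : ℝ} (hx : 0 < x) (a σ : ℝ) :
    exp (-a ^ 2 / (2 * (σ / log x))) = x ^ (-(a ^ 2 / (2 * σ))) := by
  rw [rpow_def_of_pos hx]
  congr 1
  field_simp

theorem high_noise_coordinates_rare_general
    (U : Finset ℝ) (hU0 : ∀ u ∈ U, u ≠ 0)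
    (umin umax : ℝ) (humin : IsLeast {t : ℝ | ∃ u ∈ U, t = |u|} umin)
    (humax : IsGreatest {t : ℝ | ∃ u ∈ U, t = |u|} umax)
    (huminU : umin ∈ U)
    (k N : ℕ) (hk : 1 ≤ k) (hkN : k < N) (σ2 : ℝ) (hσ : 0 < σ2)
    (σt2 : ℝ) (hσt2 : σt2 = σ2 / Real.log ((N : ℝ) / (k : ℝ))) :
    ((gaussianReal 0 σt2.toNNReal)
        {t : ℝ | (∑ u ∈ U, Real.exp ((umax * |u| - u ^ 2 / 2 + u * t) / σt2)) ≤ 1}).toReal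
      ≤ ((N : ℝ) / (k : ℝ)) ^ (-((umax - umin / 2) ^ 2 / (2 * σ2))) := by
  have hNk : 1 < (N : ℝ) / k :=
    (one_lt_div (by exact_mod_cast hk)).mpr (by exact_mod_cast hkN)
  have hσt : 0 < σt2 := hσt2 ▸ div_pos hσ (log_pos hNk)
  have humin_pos : 0 < umin := by
    obtain ⟨u, hu, rfl⟩ := humin.1
    exact abs_pos.mpr (hU0 u hu)
  have humin_le : umin ≤ umax := humax.2 ⟨umin, huminU, (abs_of_pos humin_pos).symm⟩
  have hevent : {t : ℝ | ∑ u ∈ U, exp ((umax * |u| - u ^ 2 / 2 + u * t) / σt2) ≤ 1}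
      ⊆ Set.Iic (0 - (umax - umin / 2)) := fun t ht ↦ by
    simpa [neg_sub] using le_half_sub_of_sum_exp_le_one huminU humin_pos hσt ht
  calc _ ≤ (gaussianReal 0 σt2.toNNReal).real (Set.Iic (0 - (umax - umin / 2))) :=
        measureReal_mono hevent
    _ ≤ exp (-(umax - umin / 2) ^ 2 / (2 * σt2)) := by
        simpa [Real.coe_toNNReal _ hσt.le] using
          gaussianReal_real_Iic_sub_le 0 σt2.toNNReal (by linarith : 0 ≤ umax - umin / 2)
    _ = _ := by rw [hσt2, exp_neg_sq_div_div_log_eq_rpow (by positivity)]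

theorem high_noise_coordinates_rare
    (U : Finset ℝ) (hU : U.Nonempty) (hU0 : ∀ u ∈ U, u ≠ 0)
    (umin umax : ℝ) (humin : IsLeast {t : ℝ | ∃ u ∈ U, t = |u|} umin)
    (humax : IsGreatest {t : ℝ | ∃ u ∈ U, t = |u|} umax)
    (huminU : umin ∈ U)
    (k N : ℕ) (hk : 1 ≤ k) (hkN : k < N) (σ2 : ℝ) (hσ : 0 < σ2)
    (σt2 : ℝ) (hσt2 : σt2 = σ2 / Real.log ((N : ℝ) / (k : ℝ))) :
    ((gaussianReal 0 σt2.toNNReal)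
        {t : ℝ | (∑ u ∈ U, Real.exp ((umax * |u| - u ^ 2 / 2 + u * t) / σt2)) ≤ 1}).toReal
      ≤ ((N : ℝ) / (k : ℝ)) ^ (-((umax - umin / 2) ^ 2 / (2 * σ2))) :=
  high_noise_coordinates_rare_general U hU0 umin umax humin humax huminU k N hk hkN σ2 hσ σt2 hσt2
end

section
/- Sparse-to-denser sum comparison: fix a finite nonempty set U = {u_1,…,u_M} ⊂ ℝ \ {0}, naturals w < w' ≤ k, and functions f_1, …, f_k : ℝ → [0,∞) satisfying f_i(0) ≤ ∑_{m=1}^M f_i(u_m) for every i ∈ {1,…,k}. Then ∑_{x ∈ X_w^k(U)} ∏_{i=1}^k f_i(x_i) ≤ ⌈ L_{w,w'}^k ⌉ · ∑_{x' ∈ X_{w'}^k(U)} ∏_{i=1}^k f_i(x'_i), where L_{w,w'}^k = ∏_{i=0}^{w'−w−1} (w'−i)/(k−w−i). -/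
open MeasureTheory ProbabilityTheory Real Filter Finset
open scoped ENNReal NNReal Classical

lemma mem_sparseVecs_iff {U : Finset ℝ} {k w : ℕ} {x : Fin k → ℝ} :
    x ∈ sparseVecs U (Fin k) w ↔
      (∀ i, x i ∈ insert (0:ℝ) U) ∧ (Finset.univ.filter fun i => x i ≠ 0).card = w := by
  simp [sparseVecs, Fintype.mem_piFinset]

lemma prod_update_eq {k : ℕ} (f : Fin k → ℝ → ℝ) (x : Fin k → ℝ) (j : Fin k) (u : ℝ) :
    ∏ i, f i (Function.update x j u i) = f j u * ∏ i ∈ Finset.univ.erase j, f i (x i) := by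
  have h : (fun i => f i (Function.update x j u i))
      = Function.update (fun i => f i (x i)) j (f j u) := by
    funext i
    by_cases hij : i = j
    · subst hij; simp
    · simp [Function.update_of_ne hij]
  rw [show (∏ i, f i (Function.update x j u i))
      = ∏ i, (fun i => f i (Function.update x j u i)) i from rfl, h,
    Finset.prod_update_of_mem (Finset.mem_univ j), Finset.erase_eq]

lemma step_ineq (U : Finset ℝ) (hU0 : ∀ u ∈ U, u ≠ 0)
    (k : ℕ) (f : Fin k → ℝ → ℝ) (hfnn : ∀ i t, 0 ≤ f i t)
    (hf : ∀ i, f i 0 ≤ ∑ u ∈ U, f i u) (w : ℕ) (hwk : w < k) :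
    ((k : ℝ) - w) * ∑ x ∈ sparseVecs U (Fin k) w, ∏ i, f i (x i)
      ≤ ((w : ℝ) + 1) * ∑ x ∈ sparseVecs U (Fin k) (w+1), ∏ i, f i (x i) := by
  set Xw := sparseVecs U (Fin k) w with hXw
  set Xw1 := sparseVecs U (Fin k) (w+1) with hXw1
  have card_Z : ∀ x ∈ Xw, (Finset.univ.filter fun j : Fin k => x j = 0).card = k - w := by
    intro x hx
    have hx' := (mem_sparseVecs_iff.mp hx).2
    have h := Finset.card_filter_add_card_filter_not
      (s := (Finset.univ : Finset (Fin k))) (p := fun j : Fin k => x j = 0)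
    have h2 : (Finset.univ.filter fun j : Fin k => ¬ x j = 0).card = w := hx'
    have h3 : (Finset.univ : Finset (Fin k)).card = k := by simp
    omega
  calc ((k : ℝ) - w) * ∑ x ∈ Xw, ∏ i, f i (x i)
      = ∑ x ∈ Xw, ∑ _j ∈ Finset.univ.filter (fun j : Fin k => x j = 0), ∏ i, f i (x i) := by
        rw [Finset.mul_sum]
        refine Finset.sum_congr rfl fun x hx => ?_
        rw [Finset.sum_const, nsmul_eq_mul, card_Z x hx, Nat.cast_sub hwk.le]
    _ ≤ ∑ x ∈ Xw, ∑ j ∈ Finset.univ.filter (fun j : Fin k => x j = 0), ∑ u ∈ U,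
          ∏ i, f i (Function.update x j u i) := by
        refine Finset.sum_le_sum fun x hx => Finset.sum_le_sum fun j hj => ?_
        have hxj : x j = 0 := (Finset.mem_filter.mp hj).2
        have h1 : ∏ i, f i (x i) = f j 0 * ∏ i ∈ Finset.univ.erase j, f i (x i) := by
          rw [← Finset.mul_prod_erase _ _ (Finset.mem_univ j), hxj]
        rw [h1]
        simp_rw [prod_update_eq f x j]
        rw [← Finset.sum_mul]
        exact mul_le_mul_of_nonneg_right (hf j)
          (Finset.prod_nonneg fun i _ => hfnn i _)
    _ = ∑ q ∈ (Xw.sigma fun x => Finset.univ.filter fun j : Fin k => x j = 0).sigma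
          (fun _ => U), ∏ i, f i (Function.update q.1.1 q.1.2 q.2 i) := by
        rw [Finset.sum_sigma', Finset.sum_sigma']
    _ = ∑ q ∈ Xw1.sigma (fun z => Finset.univ.filter fun j : Fin k => z j ≠ 0),
          ∏ i, f i (q.1 i) := by
        refine Finset.sum_nbij' (fun q => ⟨Function.update q.1.1 q.1.2 q.2, q.1.2⟩)
          (fun q => ⟨⟨Function.update q.1 q.2 0, q.2⟩, q.1 q.2⟩) ?_ ?_ ?_ ?_ ?_
        · rintro ⟨⟨x, j⟩, u⟩ hp
          simp only [Finset.mem_sigma, Finset.mem_filter] at hp ⊢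
          obtain ⟨⟨hx, -, hxj⟩, hu⟩ := hp
          have hu0 : u ≠ 0 := hU0 u hu
          obtain ⟨hx1, hx2⟩ := mem_sparseVecs_iff.mp hx
          refine ⟨mem_sparseVecs_iff.mpr ⟨?_, ?_⟩, Finset.mem_univ _, by simp [hu0]⟩
          · intro i
            by_cases hij : i = j
            · subst hij; simp [Finset.mem_insert, hu]
            · simpa [Function.update_of_ne hij] using hx1 i
          · have hfe : (Finset.univ.filter fun i => Function.update x j u i ≠ 0)
                = insert j (Finset.univ.filter fun i => x i ≠ 0) := by
              ext i
              by_cases hij : i = j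
              · subst hij; simp [hu0]
              · simp [Function.update_of_ne hij, hij]
            rw [hfe, Finset.card_insert_of_notMem (by simp [hxj]), hx2]
        · rintro ⟨z, j⟩ hq
          simp only [Finset.mem_sigma, Finset.mem_filter] at hq
          obtain ⟨hz, -, hzj⟩ := hq
          obtain ⟨hz1, hz2⟩ := mem_sparseVecs_iff.mp hz
          simp only [Finset.mem_sigma, Finset.mem_filter]
          refine ⟨⟨mem_sparseVecs_iff.mpr ⟨?_, ?_⟩, ⟨Finset.mem_univ _, by simp⟩⟩, ?_⟩
          · intro i
            by_cases hij : i = j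
            · subst hij; simp
            · simpa [Function.update_of_ne hij] using hz1 i
          · have hfe : (Finset.univ.filter fun i => Function.update z j 0 i ≠ 0)
                = (Finset.univ.filter fun i => z i ≠ 0).erase j := by
              ext i
              by_cases hij : i = j
              · subst hij; simp
              · simp [Function.update_of_ne hij, hij]
            rw [hfe, Finset.card_erase_of_mem (by simp [hzj]), hz2]; omega
          · have := hz1 j
            rcases Finset.mem_insert.mp this with h | h
            · exact absurd h hzj
            · exact h
        · rintro ⟨⟨x, j⟩, u⟩ hp
          simp only [Finset.mem_sigma, Finset.mem_filter] at hp
          obtain ⟨⟨-, -, hxj⟩, -⟩ := hp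
          simp only [Function.update_idem, Function.update_self]
          have hx0 : Function.update x j (0:ℝ) = x := by
            rw [← hxj]; exact Function.update_eq_self j x
          simp [hx0]
        · rintro ⟨z, j⟩ hq
          simp only [Function.update_idem, Function.update_self]
          have hz0 : Function.update (Function.update z j (0:ℝ)) j (z j) = z := by
            rw [Function.update_idem]; exact Function.update_eq_self j z
          simp [hz0]
        · rintro ⟨⟨x, j⟩, u⟩ hp
          rfl
    _ = ∑ z ∈ Xw1, ((w : ℝ) + 1) * ∏ i, f i (z i) := by
        rw [Finset.sum_sigma]
        refine Finset.sum_congr rfl fun z hz => ?_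
        rw [show (∑ s ∈ Finset.univ.filter (fun j : Fin k => z j ≠ 0),
            ∏ i, f i ((⟨z, s⟩ : Σ _ : Fin k → ℝ, Fin k).fst i))
          = ∑ _s ∈ Finset.univ.filter (fun j : Fin k => z j ≠ 0), ∏ i, f i (z i) from rfl,
          Finset.sum_const, nsmul_eq_mul, (mem_sparseVecs_iff.mp hz).2]
        push_cast; ring
    _ = ((w : ℝ) + 1) * ∑ x ∈ Xw1, ∏ i, f i (x i) := by rw [← Finset.mul_sum]

lemma lconst_eq (w w' k : ℕ) (hww' : w ≤ w') :
    Lconst w w' k = ∏ j ∈ Finset.Ico w w', (((j : ℝ) + 1) / ((k : ℝ) - j)) := by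
  unfold Lconst
  rw [Finset.prod_div_distrib, Finset.prod_div_distrib]
  congr 1
  · rw [Finset.prod_Ico_eq_prod_range, ← Finset.prod_range_reflect]
    refine Finset.prod_congr rfl fun i hi => ?_
    have hi' : i < w' - w := Finset.mem_range.mp hi
    have h1 : w' - w - 1 - i + (w + 1 + i) = w' := by omega
    have := congrArg (Nat.cast : ℕ → ℝ) h1
    push_cast at this ⊢
    linarith
  · rw [Finset.prod_Ico_eq_prod_range]
    refine Finset.prod_congr rfl fun i hi => ?_
    push_cast
    ring

lemma chain_ineq (U : Finset ℝ) (hU0 : ∀ u ∈ U, u ≠ 0)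
    (k : ℕ) (f : Fin k → ℝ → ℝ) (hfnn : ∀ i t, 0 ≤ f i t)
    (hf : ∀ i, f i 0 ≤ ∑ u ∈ U, f i u) (w : ℕ) :
    ∀ w', w ≤ w' → w' ≤ k →
      ∑ x ∈ sparseVecs U (Fin k) w, ∏ i, f i (x i)
        ≤ (∏ j ∈ Finset.Ico w w', (((j : ℝ) + 1) / ((k : ℝ) - j)))
            * ∑ x ∈ sparseVecs U (Fin k) w', ∏ i, f i (x i) := by
  intro w' hw
  induction w', hw using Nat.le_induction with
  | base => intro _; rw [Finset.Ico_self, Finset.prod_empty, one_mul]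
  | succ w' hww' ih =>
    intro hk
    have hw'k : w' < k := hk
    have hM0 : (0:ℝ) ≤ ∏ j ∈ Finset.Ico w w', (((j : ℝ) + 1) / ((k : ℝ) - j)) := by
      refine Finset.prod_nonneg fun j hj => ?_
      have hj' : j < w' := (Finset.mem_Ico.mp hj).2
      have : (j:ℝ) < k := by exact_mod_cast lt_of_lt_of_le hj' hw'k.le
      exact div_nonneg (by positivity) (by linarith)
    have hstep := step_ineq U hU0 k f hfnn hf w' hw'k
    have hpos : (0:ℝ) < (k:ℝ) - w' := by
      have : (w':ℝ) < k := by exact_mod_cast hw'k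
      linarith
    have h2 : ∑ x ∈ sparseVecs U (Fin k) w', ∏ i, f i (x i)
        ≤ (((w':ℝ) + 1) / ((k:ℝ) - w')) * ∑ x ∈ sparseVecs U (Fin k) (w'+1), ∏ i, f i (x i) := by
      rw [div_mul_eq_mul_div, le_div_iff₀ hpos, mul_comm]
      exact hstep
    calc ∑ x ∈ sparseVecs U (Fin k) w, ∏ i, f i (x i)
        ≤ (∏ j ∈ Finset.Ico w w', (((j : ℝ) + 1) / ((k : ℝ) - j)))
            * ∑ x ∈ sparseVecs U (Fin k) w', ∏ i, f i (x i) := ih hw'k.le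
      _ ≤ (∏ j ∈ Finset.Ico w w', (((j : ℝ) + 1) / ((k : ℝ) - j)))
            * ((((w':ℝ) + 1) / ((k:ℝ) - w'))
              * ∑ x ∈ sparseVecs U (Fin k) (w'+1), ∏ i, f i (x i)) :=
          mul_le_mul_of_nonneg_left h2 hM0
      _ = (∏ j ∈ Finset.Ico w (w'+1), (((j : ℝ) + 1) / ((k : ℝ) - j)))
            * ∑ x ∈ sparseVecs U (Fin k) (w'+1), ∏ i, f i (x i) := by
          rw [Finset.prod_Ico_succ_top hww']
          ring


theorem sparse_to_denser_sum_comparison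
    (U : Finset ℝ) (hU : U.Nonempty) (hU0 : ∀ u ∈ U, u ≠ 0)
    (k w w' : ℕ) (hww' : w < w') (hw'k : w' ≤ k)
    (f : Fin k → ℝ → ℝ) (hfnn : ∀ i t, 0 ≤ f i t)
    (hf : ∀ i, f i 0 ≤ ∑ u ∈ U, f i u) :
    ∑ x ∈ sparseVecs U (Fin k) w, ∏ i, f i (x i)
      ≤ (⌈Lconst w w' k⌉₊ : ℝ) * ∑ x' ∈ sparseVecs U (Fin k) w', ∏ i, f i (x' i) := by
  have h1 := chain_ineq U hU0 k f hfnn hf w w' hww'.le hw'k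
  rw [← lconst_eq w w' k hww'.le] at h1
  refine h1.trans (mul_le_mul_of_nonneg_right (Nat.le_ceil _) ?_)
  exact Finset.sum_nonneg fun x _ => Finset.prod_nonneg fun i _ => hfnn i _
end

section
/- Matching subsets into larger supersets: let k be a natural number and w ≤ w' ≤ k naturals with C(k,w) ≤ C(k,w'), where C(·,·) is the binomial coefficient. Then there exists an injective map f from the collection of w-element subsets of {1,…,k} to the collection of w'-element subsets of {1,…,k} such that S ⊆ f(S) for every w-element subset S. -/
open Finset
open scoped Classical

/-!
Containment of `w`-subsets in `w'`-subsets is a bipartite graph in which every `w`-subset has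
`C(k - w, w' - w)` neighbours and every `w'`-subset has `C(w', w)`. The identity
`C(k, w') C(w', w) = C(k, w) C(k - w, w' - w)` turns `C(k, w) ≤ C(k, w')` into
`C(w', w) ≤ C(k - w, w' - w)`, and then double counting the edges at any set `A` of `w`-subsets
shows that `A` has at least `#A` neighbours, which is Hall's condition.
-/

theorem exists_injective_rel_of_degree_bounds {ι α : Type*} [Fintype ι] [Fintype α]
    [DecidableEq α] (r : ι → α → Prop) [∀ i a, Decidable (r i a)] {d : ℕ} (hd : 0 < d)
    (hι : ∀ i, d ≤ #{a | r i a}) (hα : ∀ a, #{i | r i a} ≤ d) :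
    ∃ f : ι → α, Function.Injective f ∧ ∀ i, r i (f i) := by
  have hall : ∀ A : Finset ι, #A ≤ #(A.biUnion fun i => {a | r i a}) := fun A => by
    refine Nat.le_of_mul_le_mul_right (card_mul_le_card_mul r (fun i hi => ?_) fun a _ => ?_) hd
    · refine (hι i).trans (card_le_card fun a ha => ?_)
      rw [mem_bipartiteAbove]
      exact ⟨mem_biUnion.2 ⟨i, hi, ha⟩, (mem_filter.1 ha).2⟩
    · exact (card_le_card (filter_subset_filter _ (subset_univ A))).trans (hα a)
  obtain ⟨f, hf, hr⟩ := (all_card_le_biUnion_card_iff_exists_injective _).1 hall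
  exact ⟨f, hf, fun i => (mem_filter.1 (hr i)).2⟩

theorem Nat.choose_le_choose_sub_of_choose_le {n k s : ℕ} (hsk : s ≤ k) (hkn : k ≤ n)
    (h : n.choose s ≤ n.choose k) : k.choose s ≤ (n - s).choose (k - s) :=
  Nat.le_of_mul_le_mul_left
    (calc n.choose k * k.choose s = n.choose s * (n - s).choose (k - s) := Nat.choose_mul hsk
      _ ≤ n.choose k * (n - s).choose (k - s) := Nat.mul_le_mul_right _ h)
    (Nat.choose_pos hkn)

section CardFixedSubsets

variable {α : Type*} [Fintype α] [DecidableEq α]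

theorem card_filter_subtype_card_superset {S : Finset α} {n : ℕ} (hS : #S ≤ n) :
    #{T : {T : Finset α // #T = n} | S ⊆ T.1} = (Fintype.card α - #S).choose (n - #S) := by
  rw [← card_univ, ← card_filter_powersetCard_subset S univ n (subset_univ S) hS,
    ← card_map (Function.Embedding.subtype _)]
  congr 1
  ext T
  simp [and_comm]

theorem card_filter_subtype_card_subset (T : Finset α) (n : ℕ) :
    #{S : {S : Finset α // #S = n} | S.1 ⊆ T} = (#T).choose n := by
  rw [← card_powersetCard, ← card_map (Function.Embedding.subtype _)]
  congr 1
  ext S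
  simp [and_comm]

end CardFixedSubsets

theorem subset_matching_exists
    (k w w' : ℕ) (hww' : w ≤ w') (hw'k : w' ≤ k)
    (hchoose : k.choose w ≤ k.choose w') :
    ∃ f : {S : Finset (Fin k) // S.card = w} → {S : Finset (Fin k) // S.card = w'},
      Function.Injective f ∧ ∀ S, S.1 ⊆ (f S).1 := by
  refine exists_injective_rel_of_degree_bounds
    (fun (S : {S : Finset (Fin k) // #S = w}) (T : {T : Finset (Fin k) // #T = w'}) => S.1 ⊆ T.1)
    (Nat.choose_pos (Nat.sub_le_sub_right hw'k w)) (fun S => ?_) fun T => ?_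
  · rw [card_filter_subtype_card_superset (S.2.trans_le hww'), S.2, Fintype.card_fin]
  · rw [card_filter_subtype_card_subset, T.2]
    exact Nat.choose_le_choose_sub_of_choose_le hww' hw'k hchoose
end

section
/- Bounded-multiplicity covering of subsets by supersets: let k be a natural number and w < w' ≤ k naturals, and set L_{w,w'}^k = ∏_{i=0}^{w'−w−1} (w'−i)/(k−w−i). Then there exists a map f from the collection of w-element subsets of {1,…,k} to the collection of w'-element subsets of {1,…,k} such that S ⊆ f(S) for every w-element subset S, and every w'-element subset S' satisfies |{S : f(S) = S'}| ≤ ⌈ L_{w,w'}^k ⌉. -/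
open Finset
open scoped Classical

theorem bounded_multiplicity_covering
    (k w w' : ℕ) (hww' : w < w') (hw'k : w' ≤ k) :
    ∃ f : {S : Finset (Fin k) // S.card = w} → {S : Finset (Fin k) // S.card = w'},
      (∀ S, S.1 ⊆ (f S).1) ∧
      ∀ S' : {S : Finset (Fin k) // S.card = w'},
        (Finset.univ.filter fun S => f S = S').card ≤ ⌈Lconst w w' k⌉₊ := by
  classical
  set d := w' - w with hd
  set C := w'.choose w with hC
  set D := (k - w).choose d with hD
  set m := ⌈Lconst w w' k⌉₊ with hm
  have hwk : w ≤ k := (le_of_lt hww').trans hw'k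
  have hdw' : d ≤ w' := Nat.sub_le _ _
  have hdkw : d ≤ k - w := Nat.sub_le_sub_right hw'k w
  have hDpos : 0 < D := Nat.choose_pos hdkw
  -- `Lconst w w' k * D = C`
  have hnum : ∏ i ∈ range d, ((w' : ℝ) - i) = (w'.descFactorial d : ℝ) := by
    rw [Nat.descFactorial_eq_prod_range, Nat.cast_prod]
    refine prod_congr rfl fun i hi => ?_
    rw [Nat.cast_sub (le_of_lt (lt_of_lt_of_le (mem_range.mp hi) hdw'))]
  have hden : ∏ i ∈ range d, ((k : ℝ) - w - i) = ((k - w).descFactorial d : ℝ) := by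
    rw [Nat.descFactorial_eq_prod_range, Nat.cast_prod]
    refine prod_congr rfl fun i hi => ?_
    rw [Nat.cast_sub (le_of_lt (lt_of_lt_of_le (mem_range.mp hi) hdkw)),
      Nat.cast_sub hwk]
  have hdesc : w'.descFactorial d = d.factorial * C := by
    rw [Nat.descFactorial_eq_factorial_mul_choose]
    congr 1
    rw [hC, ← Nat.choose_symm (le_of_lt hww'), hd]
  have hdesc' : (k - w).descFactorial d = d.factorial * D := by
    rw [Nat.descFactorial_eq_factorial_mul_choose]
  have hdenpos : (0 : ℝ) < ((k - w).descFactorial d : ℝ) := by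
    rw [hdesc']
    exact_mod_cast Nat.mul_pos d.factorial_pos hDpos
  have hL : Lconst w w' k * D = C := by
    rw [Lconst, prod_div_distrib, hnum, hden, div_mul_eq_mul_div,
      div_eq_iff (ne_of_gt hdenpos), hdesc, hdesc']
    push_cast
    ring
  have hLpos : 0 < Lconst w w' k := by
    rw [Lconst]
    refine prod_pos fun i hi => ?_
    have hi1 : (i : ℝ) < (w' : ℝ) := by
      exact_mod_cast lt_of_lt_of_le (mem_range.mp hi) hdw'
    have hi2 : (i : ℝ) < (k : ℝ) - w := by
      have : i < k - w := lt_of_lt_of_le (mem_range.mp hi) hdkw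
      have := (Nat.cast_lt (α := ℝ)).mpr this
      rwa [Nat.cast_sub hwk] at this
    exact div_pos (by linarith) (by linarith)
  have hmD : C ≤ m * D := by
    have h1 : (C : ℝ) ≤ (m : ℝ) * D := by
      rw [← hL]
      exact mul_le_mul_of_nonneg_right (Nat.le_ceil _) (Nat.cast_nonneg _)
    exact_mod_cast h1
  -- counting lemmas
  have hsup : ∀ S : {S : Finset (Fin k) // S.card = w},
      (univ.filter fun S' : {T : Finset (Fin k) // T.card = w'} => S.1 ⊆ S'.1).card = D := by
    intro S
    have hcompl : S.1ᶜ.card = k - w := by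
      rw [card_compl, S.2, Fintype.card_fin]
    rw [hD, ← hcompl, ← Finset.card_powersetCard]
    have key : ∀ T ∈ powersetCard d S.1ᶜ, (S.1 ∪ T).card = w' := by
      intro T hT
      obtain ⟨hTs, hTc⟩ := Finset.mem_powersetCard.mp hT
      have hdisj : Disjoint S.1 T := by
        rw [Finset.disjoint_left]
        intro a ha haT
        exact (Finset.mem_compl.mp (hTs haT)) ha
      rw [Finset.card_union_of_disjoint hdisj, S.2, hTc, hd,
        Nat.add_sub_cancel' (le_of_lt hww')]
    refine (Finset.card_bij'
      (fun T hT => (⟨S.1 ∪ T, key T hT⟩ : {T : Finset (Fin k) // T.card = w'}))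
      (fun S' _ => S'.1 \ S.1) (fun T hT => ?_) (fun S' hS' => ?_)
      (fun T hT => ?_) (fun S' hS' => ?_)).symm
    · exact mem_filter.mpr ⟨mem_univ _, Finset.subset_union_left⟩
    · rw [Finset.mem_powersetCard]
      have hsub' : S.1 ⊆ S'.1 := (mem_filter.mp hS').2
      refine ⟨fun a ha => Finset.mem_compl.mpr (Finset.mem_sdiff.mp ha).2, ?_⟩
      rw [Finset.card_sdiff_of_subset hsub', S.2, S'.2]
    · obtain ⟨hTs, hTc⟩ := Finset.mem_powersetCard.mp hT
      have hdisj : Disjoint S.1 T := by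
        rw [Finset.disjoint_left]
        intro a ha haT
        exact (Finset.mem_compl.mp (hTs haT)) ha
      exact Finset.union_sdiff_cancel_left hdisj
    · have hsub' : S.1 ⊆ S'.1 := (mem_filter.mp hS').2
      exact Subtype.ext (Finset.union_sdiff_of_subset hsub')
  have hsub : ∀ S' : {T : Finset (Fin k) // T.card = w'},
      (univ.filter fun S : {T : Finset (Fin k) // T.card = w} => S.1 ⊆ S'.1).card = C := by
    intro S'
    have hpc : (Finset.powersetCard w S'.1).card = C := by
      rw [Finset.card_powersetCard, S'.2, hC]
    rw [← hpc]
    refine Finset.card_bij' (fun S _ => S.1) (fun A hA => ⟨A, (Finset.mem_powersetCard.mp hA).2⟩)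
      ?_ ?_ ?_ ?_
    · intro S hS
      rw [Finset.mem_powersetCard]
      exact ⟨(mem_filter.mp hS).2, S.2⟩
    · intro A hA
      simp [(Finset.mem_powersetCard.mp hA).1]
    · intro S hS; rfl
    · intro A hA; rfl
  -- Hall's theorem setup
  set t : {S : Finset (Fin k) // S.card = w} → Finset ({T : Finset (Fin k) // T.card = w'} × Fin m) :=
    fun S => (univ.filter fun S' => S.1 ⊆ S'.1) ×ˢ univ with ht
  have hall : ∀ s : Finset {S : Finset (Fin k) // S.card = w}, s.card ≤ (s.biUnion t).card := by
    intro s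
    set N := s.biUnion (fun S => univ.filter fun S' : {T : Finset (Fin k) // T.card = w'} => S.1 ⊆ S'.1) with hN
    have hprod : s.biUnion t = N ×ˢ univ := by
      ext x
      simp only [hN, ht, Finset.mem_biUnion, Finset.mem_product, mem_filter, mem_univ,
        true_and, and_true]
    rw [hprod, Finset.card_product, Finset.card_univ, Fintype.card_fin]
    -- double counting: s.card * D ≤ N.card * C
    have hdc : s.card * D ≤ N.card * C := by
      refine Finset.card_mul_le_card_mul (fun S S' => S.1 ⊆ S'.1) ?_ ?_
      · intro S hS
        rw [← hsup S]
        apply Finset.card_le_card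
        intro S' hS'
        rw [Finset.bipartiteAbove, mem_filter]
        refine ⟨?_, (mem_filter.mp hS').2⟩
        rw [hN, Finset.mem_biUnion]
        exact ⟨S, hS, hS'⟩
      · intro S' hS'
        rw [← hsub S']
        apply Finset.card_le_card
        intro S hS
        rw [Finset.bipartiteBelow, mem_filter] at hS
        exact mem_filter.mpr ⟨mem_univ _, hS.2⟩
    have : s.card * D ≤ (N.card * m) * D := by
      calc s.card * D ≤ N.card * C := hdc
        _ ≤ N.card * (m * D) := Nat.mul_le_mul_left _ hmD
        _ = (N.card * m) * D := by ring
    exact Nat.le_of_mul_le_mul_right this hDpos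
  obtain ⟨f, hfinj, hft⟩ := (Finset.all_card_le_biUnion_card_iff_exists_injective t).mp hall
  refine ⟨fun S => (f S).1, ?_, ?_⟩
  · intro S
    have := hft S
    rw [ht, Finset.mem_product, mem_filter] at this
    exact this.1.2
  · intro S'
    calc (univ.filter fun S => (f S).1 = S').card
        ≤ (univ : Finset (Fin m)).card := by
          refine Finset.card_le_card_of_injOn (fun S => (f S).2)
            (fun _ _ => mem_univ _) ?_
          intro S₁ h₁ S₂ h₂ h12
          have e₁ : (f S₁).1 = S' := (mem_filter.mp h₁).2
          have e₂ : (f S₂).1 = S' := (mem_filter.mp h₂).2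
          exact hfinj (Prod.ext (e₁.trans e₂.symm) h12)
      _ = m := by rw [Finset.card_univ, Fintype.card_fin]
end

section
/- Binomial ratio bound: for all naturals N, k, w with 1 ≤ k < N and 0 ≤ w ≤ k, one has C(N−k, w) / C(N, k) < (N/k − 1)^{w−k}, where C(·,·) denotes the binomial coefficient and the right-hand side is the real power ((N−k)/k)^{w−k} with a possibly negative integer exponent. -/
/-!
Put `m = N - k`, so that `N / k - 1 = m / k`. Since
`C(m + j + 1, j + 1) / C(m + j, j) = (m + j + 1) / (j + 1) > m / k` for `j < k`, the sequence
`C(m + j, j) * (k / m) ^ j` is strictly increasing on `j ≤ k`. Comparing its terms at `w` and `k`,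
and using `C(m, w) ≤ C(m + w, w)` (strict when `w = k ≥ 1`), gives
`C(m, w) * (k / m) ^ w < C(N, k) * (k / m) ^ k`, which is the claim.
-/

namespace Nat

theorem choose_lt_choose_add {m k : ℕ} (hm : 0 < m) (hk : 0 < k) :
    m.choose k < (m + k).choose k := by
  obtain ⟨j, rfl⟩ := Nat.exists_eq_add_one_of_ne_zero hk.ne'
  have hpascal : (m + j + 1).choose (j + 1) = (m + j).choose j + (m + j).choose (j + 1) :=
    Nat.choose_succ_succ' (m + j) j
  have hpos : 0 < (m + j).choose j := Nat.choose_pos (by omega)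
  have hmono : m.choose (j + 1) ≤ (m + j).choose (j + 1) := Nat.choose_le_choose _ (by omega)
  rw [← add_assoc]
  omega

theorem choose_add_mul_lt_choose_succ_mul {m j k : ℕ} (hj : j < k) :
    (m + j).choose j * m < (m + j + 1).choose (j + 1) * k := by
  have hpos : 0 < (m + j).choose j := Nat.choose_pos (by omega)
  have hrec := Nat.add_one_mul_choose_eq (m + j) j
  have hfactor : m * (j + 1) < (m + j + 1) * k := by nlinarith
  refine Nat.lt_of_mul_lt_mul_right (a := j + 1) ?_
  calc (m + j).choose j * m * (j + 1) = (m + j).choose j * (m * (j + 1)) := by ring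
    _ < (m + j).choose j * ((m + j + 1) * k) := Nat.mul_lt_mul_of_pos_left hfactor hpos
    _ = (m + j + 1).choose (j + 1) * (j + 1) * k := by rw [← hrec]; ring
    _ = (m + j + 1).choose (j + 1) * k * (j + 1) := by ring

end Nat

theorem strictMonoOn_choose_add_mul_pow {m : ℕ} (hm : 0 < m) (k : ℕ) :
    StrictMonoOn (fun j : ℕ => ((m + j).choose j : ℝ) * ((k : ℝ) / m) ^ j) (Set.Iic k) := by
  refine strictMonoOn_Iic_of_lt_succ fun j hj => ?_
  have hstep : ((m + j).choose j : ℝ) * m < (m + j + 1).choose (j + 1) * k := by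
    exact_mod_cast Nat.choose_add_mul_lt_choose_succ_mul hj
  have hmR : (0 : ℝ) < m := by exact_mod_cast hm
  have hkR : (0 : ℝ) < k := by exact_mod_cast j.zero_le.trans_lt hj
  simp only [Order.succ_eq_add_one, div_pow, pow_succ]
  rw [← add_assoc]
  field_simp
  exact hstep

theorem choose_mul_pow_lt_choose_add_mul_pow {m k w : ℕ} (hm : 0 < m) (hk : 0 < k) (hw : w ≤ k) :
    (m.choose w : ℝ) * ((k : ℝ) / m) ^ w < (m + k).choose k * ((k : ℝ) / m) ^ k := by
  have hr : (0 : ℝ) < (k : ℝ) / m := by positivity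
  rcases hw.lt_or_eq with hw | rfl
  · calc (m.choose w : ℝ) * ((k : ℝ) / m) ^ w
          ≤ (m + w).choose w * ((k : ℝ) / m) ^ w := by
            gcongr ?_ * _; exact_mod_cast Nat.choose_le_choose w (Nat.le_add_right m w)
      _ < (m + k).choose k * ((k : ℝ) / m) ^ k :=
          strictMonoOn_choose_add_mul_pow hm k (Set.mem_Iic.2 hw.le) Set.self_mem_Iic hw
  · gcongr
    exact_mod_cast Nat.choose_lt_choose_add hm hk

theorem binomial_ratio_bound
    (N k w : ℕ) (hk : 1 ≤ k) (hkN : k < N) (hw : w ≤ k) :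
    ((N - k).choose w : ℝ) / (N.choose k : ℝ)
      < ((N : ℝ) / (k : ℝ) - 1) ^ ((w : ℤ) - (k : ℤ)) := by
  set m := N - k
  have hN : N = m + k := by omega
  have hm : 0 < m := by omega
  have hbase : (N : ℝ) / k - 1 = ((k : ℝ) / m)⁻¹ := by
    rw [hN]; field_simp; push_cast; ring
  have hkey := choose_mul_pow_lt_choose_add_mul_pow hm hk hw
  rw [← hN] at hkey
  rw [hbase, zpow_sub₀ (by positivity), zpow_natCast, zpow_natCast, inv_pow, inv_pow, inv_div_inv,
    div_lt_div_iff₀ (by exact_mod_cast Nat.choose_pos hkN.le) (by positivity)]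
  linarith
end
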